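/- arXiv:2508.09873 — 6 statements merged into one kernel-verified Lean document; each statement's English description precedes it below -/
import Mathlib

section
/- For the grid graph G_{m,n} with n ≥ m ≥ 2, let q = ⌈(n−m)/(m+1)⌉ and r = (m+1)q − (n−m). If ⌈(n−m)/(m+1)⌉ ≤ ⌊(n−m)/(m−1)⌋, then the zero blocking number satisfies B(G_{m,n}) ≤ m(q+1) − ⌊r/2⌋. -/
/-- A set `S` is closed under the zero forcing rule: whenever a (black) vertex
`v ∈ S` has exactly one neighbor outside `S`, that neighbor lies in `S`. -/
def ZFClosed {V : Type*} (G : SimpleGraph V) (S : Set V) : Prop :=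
  ∀ v ∈ S, ∀ w : V, G.neighborSet v \ S = {w} → w ∈ S

/-- The final black set of the zero forcing process started from `B`:
the smallest superset of `B` closed under the zero forcing rule. -/
def zfClosure {V : Type*} (G : SimpleGraph V) (B : Set V) : Set V :=
  ⋂₀ {S : Set V | B ⊆ S ∧ ZFClosed G S}

/-- `B` is a zero forcing set if the process colors every vertex black. -/
def IsZeroForcingSet {V : Type*} (G : SimpleGraph V) (B : Set V) : Prop :=
  zfClosure G B = Set.univ

/-- `W` is a zero blocking set if its complement is not a zero forcing set. -/
def IsZeroBlockingSet {V : Type*} (G : SimpleGraph V) (W : Set V) : Prop :=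
  ¬ IsZeroForcingSet G Wᶜ

/-- The zero blocking number: minimum size of a zero blocking set. -/
noncomputable def zeroBlockingNumber {V : Type*} (G : SimpleGraph V) : ℕ :=
  sInf {k : ℕ | ∃ W : Set V, IsZeroBlockingSet G W ∧ W.ncard = k}

/-- A minimum zero blocking set. -/
def IsMinZeroBlockingSet {V : Type*} (G : SimpleGraph V) (W : Set V) : Prop :=
  IsZeroBlockingSet G W ∧ W.ncard = zeroBlockingNumber G

/-- Vertices of the grid graph `G_{m,n}`: lattice points `(x,y)` with
`1 ≤ x ≤ n` and `1 ≤ y ≤ m`. -/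
abbrev GridVert (m n : ℤ) : Type :=
  {p : ℤ × ℤ // 1 ≤ p.1 ∧ p.1 ≤ n ∧ 1 ≤ p.2 ∧ p.2 ≤ m}

/-- The grid graph `G_{m,n} = P_m □ P_n`. -/
def gridGraph (m n : ℤ) : SimpleGraph (GridVert m n) where
  Adj p q := |p.val.1 - q.val.1| + |p.val.2 - q.val.2| = 1
  symm := by
    constructor
    intro p q h
    rw [abs_sub_comm, abs_sub_comm p.val.2] at h
    exact h
  loopless := by
    constructor
    intro p h
    simp at h


namespace ZBAux

/-- start column of leg `k` -/
def cc (m s w k : ℤ) : ℤ := if k ≤ s then 1 + k*(m-1) else 1 + k*(m+1) - 2*s - w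

/-- height of the white cell of leg `k` in column `x` -/
def ht (m s w k x : ℤ) : ℤ := if k % 2 = 0 then x - cc m s w k + 1 else cc m s w k + m - x

/-- the white predicate -/
def WP (m s w q x y : ℤ) : Prop :=
  ∃ k, 0 ≤ k ∧ k ≤ q ∧ cc m s w k ≤ x ∧ x ≤ cc m s w k + m - 1 ∧ y = ht m s w k x

lemma ht_even {m s w k : ℤ} (hp : k % 2 = 0) (x : ℤ) :
    ht m s w k x = x - cc m s w k + 1 := by rw [ht, if_pos hp]

lemma ht_odd {m s w k : ℤ} (hp : k % 2 = 1) (x : ℤ) :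
    ht m s w k x = cc m s w k + m - x := by rw [ht, if_neg (by omega)]

lemma cc_succ (m s w : ℤ) (hw0 : 0 ≤ w) (hw1 : w ≤ 1) (k : ℤ) :
    cc m s w (k+1) = cc m s w k + m - 1 ∨ cc m s w (k+1) = cc m s w k + m ∨
    cc m s w (k+1) = cc m s w k + m + 1 := by
  unfold cc
  split_ifs with h1 h2 h3
  · left; ring
  · omega
  · have hk : k = s := by omega
    subst hk
    interval_cases w
    · right; right; ring
    · right; left; ring
  · right; right; ring

lemma cc_succ_ge (m s w : ℤ) (hm : 2 ≤ m) (hw0 : 0 ≤ w) (hw1 : w ≤ 1) (k : ℤ) :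
    cc m s w k + m - 1 ≤ cc m s w (k+1) := by
  rcases cc_succ m s w hw0 hw1 k with h|h|h <;> omega

lemma cc_mono (m s w : ℤ) (hm : 2 ≤ m) (hw0 : 0 ≤ w) (hw1 : w ≤ 1) {a b : ℤ} (h : a ≤ b) :
    cc m s w a ≤ cc m s w b := by
  refine Int.le_induction (motive := fun b _ => cc m s w a ≤ cc m s w b) (le_refl _) (fun b _ ih => ?_) b h
  have := cc_succ_ge m s w hm hw0 hw1 b; omega

lemma cc_zero (m s w : ℤ) (hs : 0 ≤ s) : cc m s w 0 = 1 := by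
  rw [cc, if_pos hs]; ring

lemma cc_pos (m s w : ℤ) (hm : 2 ≤ m) (hs : 0 ≤ s) (hw0 : 0 ≤ w) (hw1 : w ≤ 1)
    {k : ℤ} (hk : 0 ≤ k) : 1 ≤ cc m s w k := by
  have := cc_mono m s w hm hw0 hw1 hk
  rw [cc_zero m s w hs] at this
  exact this

lemma adj_iff (x y a b : ℤ) : |x - a| + |y - b| = 1 ↔
    ((a = x+1 ∧ b = y) ∨ (a = x-1 ∧ b = y) ∨ (a = x ∧ b = y+1) ∨ (a = x ∧ b = y-1)) := by
  rcases abs_cases (x - a) with ⟨h1, _⟩|⟨h1, _⟩ <;> rcases abs_cases (y - b) with ⟨h2,_⟩|⟨h2,_⟩ <;>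
    rw [h1, h2] <;> omega

lemma WP_unique (m s w q : ℤ) (hm : 2 ≤ m) (hs : 0 ≤ s) (hw0 : 0 ≤ w) (hw1 : w ≤ 1)
    {x y1 y2 : ℤ} (h1 : WP m s w q x y1) (h2 : WP m s w q x y2) : y1 = y2 := by
  have key : ∀ k1 k2 y1 y2 : ℤ, k1 ≤ k2 →
      cc m s w k1 ≤ x → x ≤ cc m s w k1 + m - 1 → y1 = ht m s w k1 x →
      cc m s w k2 ≤ x → x ≤ cc m s w k2 + m - 1 → y2 = ht m s w k2 x → y1 = y2 := by
    intro k1 k2 y1 y2 hle hl1 hr1 hy1 hl2 hr2 hy2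
    rcases eq_or_lt_of_le hle with h | h
    · subst h; omega
    · have hg1 := cc_succ_ge m s w hm hw0 hw1 k1
      have hg2 : cc m s w (k1+1) ≤ cc m s w k2 := cc_mono m s w hm hw0 hw1 (by omega)
      by_cases hgap : k1 + 2 ≤ k2
      · exfalso
        have hg3 := cc_succ_ge m s w hm hw0 hw1 (k1+1)
        have hg4 : cc m s w (k1+1+1) ≤ cc m s w k2 := cc_mono m s w hm hw0 hw1 (by omega)
        omega
      · have hk2 : k2 = k1 + 1 := by omega
        subst hk2
        rcases Int.emod_two_eq k1 with hp | hp
        · rw [ht_even hp] at hy1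
          rw [ht_odd (by omega : (k1+1) % 2 = 1)] at hy2
          omega
        · rw [ht_odd hp] at hy1
          rw [ht_even (by omega : (k1+1) % 2 = 0)] at hy2
          omega
  obtain ⟨k1, hk10, hk1q, hl1, hr1, hy1⟩ := h1
  obtain ⟨k2, hk20, hk2q, hl2, hr2, hy2⟩ := h2
  rcases le_total k1 k2 with h | h
  · exact key k1 k2 y1 y2 h hl1 hr1 hy1 hl2 hr2 hy2
  · exact (key k2 k1 y2 y1 h hl2 hr2 hy2 hl1 hr1 hy1).symm


/-- Core lemma: if a black cell `(x,y)` has a white neighbor `(a,b)`,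
then it has a second, different white neighbor. -/
lemma fort_main (m s w q n : ℤ) (hm : 2 ≤ m) (hs : 0 ≤ s) (hw0 : 0 ≤ w) (hw1 : w ≤ 1)
    (hswq : s + w ≤ q) (hn : n = cc m s w q + m - 1)
    (x y a b : ℤ) (hx1 : 1 ≤ x) (hxn : x ≤ n) (hy1 : 1 ≤ y) (hym : y ≤ m)
    (hv : ¬ WP m s w q x y) (hW : WP m s w q a b) (hadj : |x - a| + |y - b| = 1) :
    ∃ a' b', (1 ≤ a' ∧ a' ≤ n ∧ 1 ≤ b' ∧ b' ≤ m) ∧ WP m s w q a' b' ∧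
      |x - a'| + |y - b'| = 1 ∧ ¬(a' = a ∧ b' = b) := by
  obtain ⟨k, hk0, hkq, hcl, hcr, hy⟩ := hW
  have hck : 1 ≤ cc m s w k := cc_pos m s w hm hs hw0 hw1 hk0
  have hcq : cc m s w k ≤ cc m s w q := cc_mono m s w hm hw0 hw1 hkq
  rw [adj_iff] at hadj
  rcases hadj with ⟨ha, hb⟩ | ⟨ha, hb⟩ | ⟨ha, hb⟩ | ⟨ha, hb⟩
  · -- white at (x+1, y)
    rcases Int.emod_two_eq k with hp | hp
    · rw [ht_even hp] at hy
      by_cases hpx : cc m s w k ≤ x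
      · exact ⟨x, y - 1, ⟨by omega, by omega, by omega, by omega⟩,
          ⟨k, hk0, hkq, by omega, by omega, by rw [ht_even hp]; omega⟩,
          by rw [adj_iff]; omega, by omega⟩
      · -- x = cc k - 1, y = 1: bounce at bottom between legs k-1 and k
        have hk1 : 1 ≤ k := by
          by_contra h
          have hk' : k = 0 := by omega
          rw [hk', cc_zero m s w hs] at hpx
          omega
        have hck' : 1 ≤ cc m s w (k-1) := cc_pos m s w hm hs hw0 hw1 (by omega)
        have hδ := cc_succ m s w hw0 hw1 (k-1)
        rw [show k - 1 + 1 = k by omega] at hδ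
        have hp' : (k-1) % 2 = 1 := by omega
        rcases hδ with hδ | hδ | hδ
        · exact ⟨x, y+1, ⟨by omega, by omega, by omega, by omega⟩,
            ⟨k-1, by omega, by omega, by omega, by omega, by rw [ht_odd hp']; omega⟩,
            by rw [adj_iff]; omega, by omega⟩
        · exact absurd ⟨k-1, by omega, by omega, by omega, by omega,
            by rw [ht_odd hp']; omega⟩ hv
        · exact ⟨x-1, y, ⟨by omega, by omega, by omega, by omega⟩,
            ⟨k-1, by omega, by omega, by omega, by omega, by rw [ht_odd hp']; omega⟩,
            by rw [adj_iff]; omega, by omega⟩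
    · rw [ht_odd hp] at hy
      by_cases hpx : cc m s w k ≤ x
      · exact ⟨x, y + 1, ⟨by omega, by omega, by omega, by omega⟩,
          ⟨k, hk0, hkq, by omega, by omega, by rw [ht_odd hp]; omega⟩,
          by rw [adj_iff]; omega, by omega⟩
      · -- x = cc k - 1, y = m: bounce at top between legs k-1 and k
        have hk1 : 1 ≤ k := by
          by_contra h
          have hk' : k = 0 := by omega
          rw [hk', cc_zero m s w hs] at hpx
          omega
        have hck' : 1 ≤ cc m s w (k-1) := cc_pos m s w hm hs hw0 hw1 (by omega)
        have hδ := cc_succ m s w hw0 hw1 (k-1)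
        rw [show k - 1 + 1 = k by omega] at hδ
        have hp' : (k-1) % 2 = 0 := by omega
        rcases hδ with hδ | hδ | hδ
        · exact ⟨x, y-1, ⟨by omega, by omega, by omega, by omega⟩,
            ⟨k-1, by omega, by omega, by omega, by omega, by rw [ht_even hp']; omega⟩,
            by rw [adj_iff]; omega, by omega⟩
        · exact absurd ⟨k-1, by omega, by omega, by omega, by omega,
            by rw [ht_even hp']; omega⟩ hv
        · exact ⟨x-1, y, ⟨by omega, by omega, by omega, by omega⟩,
            ⟨k-1, by omega, by omega, by omega, by omega, by rw [ht_even hp']; omega⟩,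
            by rw [adj_iff]; omega, by omega⟩
  · -- white at (x-1, y)
    rcases Int.emod_two_eq k with hp | hp
    · rw [ht_even hp] at hy
      by_cases hpx : x - 1 ≤ cc m s w k + m - 2
      · exact ⟨x, y + 1, ⟨by omega, by omega, by omega, by omega⟩,
          ⟨k, hk0, hkq, by omega, by omega, by rw [ht_even hp]; omega⟩,
          by rw [adj_iff]; omega, by omega⟩
      · -- x - 1 = cc k + m - 1, y = m: bounce at top between legs k and k+1
        have hkq' : k < q := by
          rcases eq_or_lt_of_le hkq with h | h
          · exfalso; rw [h] at hpx; omega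
          · exact h
        have hδ := cc_succ m s w hw0 hw1 k
        have hp' : (k+1) % 2 = 1 := by omega
        have hcq1 : cc m s w (k+1) ≤ cc m s w q := cc_mono m s w hm hw0 hw1 (by omega)
        rcases hδ with hδ | hδ | hδ
        · exact ⟨x, y-1, ⟨by omega, by omega, by omega, by omega⟩,
            ⟨k+1, by omega, by omega, by omega, by omega, by rw [ht_odd hp']; omega⟩,
            by rw [adj_iff]; omega, by omega⟩
        · exact absurd ⟨k+1, by omega, by omega, by omega, by omega,
            by rw [ht_odd hp']; omega⟩ hv
        · exact ⟨x+1, y, ⟨by omega, by omega, by omega, by omega⟩,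
            ⟨k+1, by omega, by omega, by omega, by omega, by rw [ht_odd hp']; omega⟩,
            by rw [adj_iff]; omega, by omega⟩
    · rw [ht_odd hp] at hy
      by_cases hpx : x - 1 ≤ cc m s w k + m - 2
      · exact ⟨x, y - 1, ⟨by omega, by omega, by omega, by omega⟩,
          ⟨k, hk0, hkq, by omega, by omega, by rw [ht_odd hp]; omega⟩,
          by rw [adj_iff]; omega, by omega⟩
      · -- x - 1 = cc k + m - 1, y = 1: bounce at bottom between legs k and k+1
        have hkq' : k < q := by
          rcases eq_or_lt_of_le hkq with h | h
          · exfalso; rw [h] at hpx; omega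
          · exact h
        have hδ := cc_succ m s w hw0 hw1 k
        have hp' : (k+1) % 2 = 0 := by omega
        have hcq1 : cc m s w (k+1) ≤ cc m s w q := cc_mono m s w hm hw0 hw1 (by omega)
        rcases hδ with hδ | hδ | hδ
        · exact ⟨x, y+1, ⟨by omega, by omega, by omega, by omega⟩,
            ⟨k+1, by omega, by omega, by omega, by omega, by rw [ht_even hp']; omega⟩,
            by rw [adj_iff]; omega, by omega⟩
        · exact absurd ⟨k+1, by omega, by omega, by omega, by omega,
            by rw [ht_even hp']; omega⟩ hv
        · exact ⟨x+1, y, ⟨by omega, by omega, by omega, by omega⟩,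
            ⟨k+1, by omega, by omega, by omega, by omega, by rw [ht_even hp']; omega⟩,
            by rw [adj_iff]; omega, by omega⟩
  · -- white at (x, y+1)
    rcases Int.emod_two_eq k with hp | hp
    · rw [ht_even hp] at hy
      exact ⟨x - 1, y, ⟨by omega, by omega, by omega, by omega⟩,
        ⟨k, hk0, hkq, by omega, by omega, by rw [ht_even hp]; omega⟩,
        by rw [adj_iff]; omega, by omega⟩
    · rw [ht_odd hp] at hy
      exact ⟨x + 1, y, ⟨by omega, by omega, by omega, by omega⟩,
        ⟨k, hk0, hkq, by omega, by omega, by rw [ht_odd hp]; omega⟩,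
        by rw [adj_iff]; omega, by omega⟩
  · -- white at (x, y-1)
    rcases Int.emod_two_eq k with hp | hp
    · rw [ht_even hp] at hy
      exact ⟨x + 1, y, ⟨by omega, by omega, by omega, by omega⟩,
        ⟨k, hk0, hkq, by omega, by omega, by rw [ht_even hp]; omega⟩,
        by rw [adj_iff]; omega, by omega⟩
    · rw [ht_odd hp] at hy
      exact ⟨x - 1, y, ⟨by omega, by omega, by omega, by omega⟩,
        ⟨k, hk0, hkq, by omega, by omega, by rw [ht_odd hp]; omega⟩,
        by rw [adj_iff]; omega, by omega⟩


end ZBAux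

open ZBAux in
lemma zb_main_aux (m n s w q : ℤ) (hm : 2 ≤ m) (hs : 0 ≤ s) (hw0 : 0 ≤ w) (hw1 : w ≤ 1)
    (hswq : s + w ≤ q) (hn : n = cc m s w q + m - 1) :
    (zeroBlockingNumber (gridGraph m n) : ℤ) ≤ m * (q + 1) - s := by
  classical
  have hq0 : 0 ≤ q := by omega
  have hcq1 : 1 ≤ cc m s w q := cc_pos m s w hm hs hw0 hw1 hq0
  have hnm : m ≤ n := by omega
  set G := gridGraph m n with hG
  set Wset : Set (GridVert m n) := {v | WP m s w q v.val.1 v.val.2} with hWset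
  have hclosed : ZFClosed G Wsetᶜ := by
    intro v hv u hu
    exfalso
    have hmem : u ∈ G.neighborSet v \ Wsetᶜ := by rw [hu]; exact rfl
    obtain ⟨hadj, hunw⟩ := hmem
    have huW : WP m s w q u.val.1 u.val.2 := Set.not_notMem.mp hunw
    have hadj' : |v.val.1 - u.val.1| + |v.val.2 - u.val.2| = 1 := hadj
    obtain ⟨hv1, hvn, hv2, hvm⟩ := v.2
    obtain ⟨a', b', hb, hWP', hadj2, hne⟩ :=
      fort_main m s w q n hm hs hw0 hw1 hswq hn v.val.1 v.val.2 u.val.1 u.val.2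
        hv1 hvn hv2 hvm hv huW hadj'
    have hmem2 : (⟨(a', b'), ⟨hb.1, hb.2.1, hb.2.2.1, hb.2.2.2⟩⟩ : GridVert m n)
        ∈ G.neighborSet v \ Wsetᶜ := ⟨hadj2, fun hc => hc hWP'⟩
    rw [hu] at hmem2
    have heq := Set.mem_singleton_iff.mp hmem2
    exact hne ⟨congrArg (fun t : GridVert m n => t.val.1) heq,
      congrArg (fun t : GridVert m n => t.val.2) heq⟩
  have hblock : IsZeroBlockingSet G Wset := by
    intro hforce
    have hsub : zfClosure G Wsetᶜ ⊆ Wsetᶜ :=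
      Set.sInter_subset_of_mem ⟨Set.Subset.rfl, hclosed⟩
    rw [hforce] at hsub
    have hc0 : cc m s w 0 = 1 := cc_zero m s w hs
    have hv0 : (⟨(1,1), ⟨le_refl _, by omega, le_refl _, by omega⟩⟩ : GridVert m n) ∈ Wset := by
      show WP m s w q 1 1
      exact ⟨0, le_refl _, hq0, by omega, by omega,
        by rw [ht_even (by norm_num)]; omega⟩
    exact (hsub (Set.mem_univ _)) hv0
  -- cardinality bound
  have hinj : Set.InjOn (fun v : GridVert m n => v.val.1) Wset := by
    intro v1 h1 v2 h2 he
    have he' : v1.val.1 = v2.val.1 := he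
    have h2' : WP m s w q v1.val.1 v2.val.2 := by rw [he']; exact h2
    have hyy := WP_unique m s w q hm hs hw0 hw1 h1 h2'
    exact Subtype.ext (Prod.ext he' hyy)
  set C : Finset ℤ := Finset.Icc 1 (cc m s w s + m - 1) ∪
      (Finset.Ioc s q).biUnion (fun k => Finset.Icc (cc m s w k) (cc m s w k + m - 1)) with hC
  have himg : (fun v : GridVert m n => v.val.1) '' Wset ⊆ ↑C := by
    rintro z ⟨v, hv, rfl⟩
    obtain ⟨k, hk0, hkq, h1, h2, _⟩ := hv
    have hck := cc_pos m s w hm hs hw0 hw1 hk0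
    simp only [hC, Finset.coe_union, Set.mem_union, Finset.coe_biUnion, Set.mem_iUnion,
      Finset.coe_Icc, Set.mem_Icc, Finset.mem_coe, Finset.mem_Ioc]
    by_cases hks : k ≤ s
    · left
      have := cc_mono m s w hm hw0 hw1 hks
      omega
    · right
      exact ⟨k, ⟨by omega, hkq⟩, by omega, by omega⟩
  have hcard1 : Wset.ncard = ((fun v : GridVert m n => v.val.1) '' Wset).ncard :=
    (Set.ncard_image_of_injOn hinj).symm
  have hcard2 : ((fun v : GridVert m n => v.val.1) '' Wset).ncard ≤ C.card := by
    rw [← Set.ncard_coe_finset]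
    exact Set.ncard_le_ncard himg C.finite_toSet
  have hccs : cc m s w s = 1 + s * (m-1) := by rw [cc, if_pos le_rfl]
  have hsm : (0:ℤ) ≤ s * (m-1) := mul_nonneg hs (by omega)
  have hb := Finset.card_biUnion_le (s := Finset.Ioc s q)
    (t := fun k => Finset.Icc (cc m s w k) (cc m s w k + m - 1))
  have hterm : ∀ k ∈ Finset.Ioc s q,
      (Finset.Icc (cc m s w k) (cc m s w k + m - 1)).card = m.toNat := by
    intro k _
    rw [Int.card_Icc]
    congr 1
    ring
  rw [Finset.sum_congr rfl hterm, Finset.sum_const, smul_eq_mul, Int.card_Ioc] at hb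
  have hIcc : (Finset.Icc (1:ℤ) (cc m s w s + m - 1)).card = (s * (m-1) + m).toNat := by
    rw [Int.card_Icc, hccs]
    congr 1
    ring
  have hu := Finset.card_union_le (Finset.Icc (1:ℤ) (cc m s w s + m - 1))
    ((Finset.Ioc s q).biUnion (fun k => Finset.Icc (cc m s w k) (cc m s w k + m - 1)))
  have hCN : C.card ≤ (s*(m-1)+m).toNat + (q-s).toNat * m.toNat := by
    rw [hC]
    calc (Finset.Icc 1 (cc m s w s + m - 1) ∪ _).card ≤ _ := hu
      _ ≤ (s*(m-1)+m).toNat + (q-s).toNat * m.toNat := by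
          rw [hIcc]; exact Nat.add_le_add_left hb _
  have e1 : ((s*(m-1)+m).toNat : ℤ) = s*(m-1)+m := Int.toNat_of_nonneg (by omega)
  have e2 : (((q - s).toNat : ℤ)) = q - s := Int.toNat_of_nonneg (by omega)
  have e3 : ((m.toNat : ℤ)) = m := Int.toNat_of_nonneg (by omega)
  have hCZ : (C.card : ℤ) ≤ m * (q + 1) - s := by
    have h' : (C.card : ℤ) ≤ (((s*(m-1)+m).toNat + (q-s).toNat * m.toNat : ℕ) : ℤ) := by
      exact_mod_cast hCN
    push_cast at h'
    rw [e1, e2, e3] at h'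
    nlinarith [h']
  have hle : zeroBlockingNumber G ≤ Wset.ncard := Nat.sInf_le ⟨Wset, hblock, rfl⟩
  have hWZ : (Wset.ncard : ℤ) ≤ m * (q + 1) - s := by
    rw [hcard1]
    calc (((fun v : GridVert m n => v.val.1) '' Wset).ncard : ℤ) ≤ (C.card : ℤ) := by
          exact_mod_cast hcard2
      _ ≤ _ := hCZ
  calc (zeroBlockingNumber G : ℤ) ≤ (Wset.ncard : ℤ) := by exact_mod_cast hle
    _ ≤ _ := hWZ


/-- **Upper bound (Beaudouin-Lafon et al.), first case.** For `n ≥ m ≥ 2`, with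
`q = ⌈(n−m)/(m+1)⌉` and `r = (m+1)q − (n−m)`: if `⌈(n−m)/(m+1)⌉ ≤ ⌊(n−m)/(m−1)⌋`,
then `B(G_{m,n}) ≤ m(q+1) − ⌊r/2⌋`. -/
theorem zero_blocking_upper_bound_first (m n : ℤ) (hm : 2 ≤ m) (hmn : m ≤ n)
    (q r : ℤ) (hq : q = ⌈(n - m : ℚ) / (m + 1 : ℚ)⌉)
    (hr : r = (m + 1) * q - (n - m))
    (hcase : ⌈(n - m : ℚ) / (m + 1 : ℚ)⌉ ≤ ⌊(n - m : ℚ) / (m - 1 : ℚ)⌋) :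
    (zeroBlockingNumber (gridGraph m n) : ℤ) ≤ m * (q + 1) - ⌊(r : ℚ) / 2⌋ := by
  have hmQ : (2:ℚ) ≤ (m:ℚ) := by exact_mod_cast hm
  have hmnQ : (m:ℚ) ≤ (n:ℚ) := by exact_mod_cast hmn
  have hmq : (0:ℚ) < (m:ℚ) + 1 := by linarith
  have hmq1 : (0:ℚ) < (m:ℚ) - 1 := by linarith
  have hnmq : (0:ℚ) ≤ (n:ℚ) - (m:ℚ) := by linarith
  have hq0 : 0 ≤ q := by
    rw [hq]; exact Int.ceil_nonneg (div_nonneg hnmq (le_of_lt hmq))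
  have hr0 : 0 ≤ r := by
    have h := Int.le_ceil ((n - m : ℚ) / (m + 1 : ℚ))
    rw [← hq] at h
    rw [div_le_iff₀ hmq] at h
    have h2 : (n - m : ℤ) ≤ q * (m + 1) := by exact_mod_cast h
    linarith [hr, h2]
  have hr2q : r ≤ 2 * q := by
    have h := hcase
    rw [← hq] at h
    have h2 : (q:ℚ) ≤ (n - m : ℚ) / (m - 1 : ℚ) := by
      have := Int.le_floor.mp h
      exact_mod_cast this
    rw [le_div_iff₀ hmq1] at h2
    have h3 : q * (m - 1) ≤ (n - m : ℤ) := by exact_mod_cast h2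
    linarith [hr, h3]
  set s : ℤ := r / 2 with hsdef
  set w : ℤ := r % 2 with hwdef
  have hrsw : r = 2 * s + w := by omega
  have hs : 0 ≤ s := by omega
  have hw0 : 0 ≤ w := by omega
  have hw1 : w ≤ 1 := by omega
  have hswq : s + w ≤ q := by omega
  have hfl : ⌊(r : ℚ) / 2⌋ = s := by
    rw [Int.floor_eq_iff]
    constructor
    · rw [le_div_iff₀ (by norm_num : (0:ℚ) < 2)]
      push_cast
      have : 2 * s ≤ r := by omega
      exact_mod_cast by push_cast; linarith [this]
    · rw [div_lt_iff₀ (by norm_num : (0:ℚ) < 2)]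
      have : r < 2 * (s + 1) := by omega
      push_cast
      exact_mod_cast by push_cast; linarith [this]
  have hn : n = ZBAux.cc m s w q + m - 1 := by
    rw [ZBAux.cc]
    split_ifs with h
    · have hsq : s = q := by omega
      have hw' : w = 0 := by omega
      have hr' : r = 2 * q := by omega
      linarith [hr, hr']
    · linarith [hr, hrsw]
  rw [hfl]
  exact zb_main_aux m n s w q hm hs hw0 hw1 hswq hn
end

section
/- For the grid graph G_{m,n} with n ≥ m ≥ 2, if ⌈(n−m)/(m+1)⌉ > ⌊(n−m)/(m−1)⌋, then the zero blocking number satisfies B(G_{m,n}) ≤ n + m − ⌊(n−m)/(m+1)⌋ − 2. -/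
namespace ZBAux

def Wh (m n r x y : ℤ) : Prop :=
  (2*(m+1) ∣ x + y - (n+1) ∨ 2*(m+1) ∣ x - y - (n+1)) ∨
  (x ≤ m - r ∧ (2*(m+1) ∣ x + y + (n+1) ∨ 2*(m+1) ∣ x - y + (n+1))) ∨
  ((m - r + 1 ≤ x ∧ x ≤ m - 1) ∧
    (2*(m+1) ∣ x + y - (2*m - n - 1) ∨ 2*(m+1) ∣ x - y - (2*m - n - 1)))

lemma dshift {M A B : ℤ} (h : M ∣ A) (k : ℤ) (e : B = A + M * k) : M ∣ B := by
  subst e; exact dvd_add h (dvd_mul_right M k)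

lemma dshiftn {M A B : ℤ} (h : M ∣ A) (k : ℤ) (e : B = -A + M * k) : M ∣ B := by
  subst e; exact dvd_add (dvd_neg.mpr h) (dvd_mul_right M k)

lemma eq0_of_dvd {M A : ℤ} (h : M ∣ A) (h1 : -M < A) (h2 : A < M) : A = 0 :=
  Int.eq_zero_of_abs_lt_dvd h (abs_lt.mpr ⟨h1, h2⟩)

lemma eqM_of_dvd {M A : ℤ} (hM : 0 < M) (h : M ∣ A) (h1 : 0 < A) (h2 : A < 2*M) : A = M := by
  obtain ⟨k, rfl⟩ := h
  have hk1 : 1 ≤ k := by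
    by_contra hc
    push_neg at hc
    have hk0 : k ≤ 0 := by omega
    have : M * k ≤ 0 := mul_nonpos_of_nonneg_of_nonpos (le_of_lt hM) hk0
    omega
  have hk2 : k ≤ 1 := by
    by_contra hc
    push_neg at hc
    have hk0 : 2 ≤ k := by omega
    have : M * 2 ≤ M * k := mul_le_mul_of_nonneg_left hk0 (le_of_lt hM)
    omega
  have : k = 1 := le_antisymm hk2 hk1
  rw [this, mul_one]

lemma exists_half {m B : ℤ} (hm : 0 < m + 1) (h : 2*(m+1) ∣ B*(m+1)) : ∃ s, B = 2*s := by
  obtain ⟨k, hk⟩ := h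
  refine ⟨k, ?_⟩
  have h2 : B*(m+1) = (2*k)*(m+1) := by linarith
  exact mul_right_cancel₀ (by omega : (m+1:ℤ) ≠ 0) h2

lemma adjR (x y : ℤ) : |x - (x+1)| + |y - y| = 1 := by
  rw [show x-(x+1) = -1 by ring, show y - y = 0 by ring]; norm_num
lemma adjL (x y : ℤ) : |x - (x-1)| + |y - y| = 1 := by
  rw [show x-(x-1) = 1 by ring, show y - y = 0 by ring]; norm_num
lemma adjU (x y : ℤ) : |x - x| + |y - (y+1)| = 1 := by
  rw [show x-x = 0 by ring, show y - (y+1) = -1 by ring]; norm_num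
lemma adjD (x y : ℤ) : |x - x| + |y - (y-1)| = 1 := by
  rw [show x-x = 0 by ring, show y - (y-1) = 1 by ring]; norm_num

lemma two_white (m n t r x y wx wy : ℤ) (hm : 2 ≤ m) (ht : 0 ≤ t)
    (hr1 : 1 ≤ r) (hr2 : r ≤ m - 2 - 2*t) (hn : n = m + t*(m+1) + r)
    (hx1 : 1 ≤ x) (hx2 : x ≤ n) (hy1 : 1 ≤ y) (hy2 : y ≤ m)
    (hw1 : 1 ≤ wx) (hw2 : wx ≤ n) (hw3 : 1 ≤ wy) (hw4 : wy ≤ m)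
    (hadj : |x - wx| + |y - wy| = 1) (hw : Wh m n r wx wy) :
    ∃ ax ay : ℤ, (1 ≤ ax ∧ ax ≤ n ∧ 1 ≤ ay ∧ ay ≤ m) ∧ |x - ax| + |y - ay| = 1 ∧
      ¬(ax = wx ∧ ay = wy) ∧ Wh m n r ax ay := by
  have hM : (0:ℤ) < m + 1 := by omega
  have h21 : (m+1 : ℤ) ∣ 2*(m+1) := ⟨2, by ring⟩
  have hT0 : (0:ℤ) ≤ t*(m+1) := mul_nonneg ht (by omega)
  have hmn : m + r ≤ n := by omega
  have hcases : (wx = x+1 ∧ wy = y) ∨ (wx = x-1 ∧ wy = y) ∨ (wx = x ∧ wy = y+1)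
      ∨ (wx = x ∧ wy = y-1) := by
    rcases abs_cases (x - wx) with ⟨e1, _⟩ | ⟨e1, _⟩ <;>
      rcases abs_cases (y - wy) with ⟨e2, _⟩ | ⟨e2, _⟩ <;>
      rw [e1, e2] at hadj <;> omega
  rcases hcases with ⟨ex, ey⟩ | ⟨ex, ey⟩ | ⟨ex, ey⟩ | ⟨ex, ey⟩ <;> rw [ex, ey] at hw <;>
    rcases hw with (hd | hd) | ⟨hs, (hd | hd)⟩ | ⟨⟨hs1, hs2⟩, (hd | hd)⟩
  -- ============ CASE A : w = (x+1, y) ============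
  -- A1+
  · by_cases hym : y < m
    · exact ⟨x, y+1, ⟨hx1, hx2, by omega, by omega⟩, adjU x y, by omega,
        Or.inl (Or.inl (dshift hd 0 (by ring)))⟩
    · have hym' : y = m := by omega
      by_cases hx' : 2 ≤ x
      · exact ⟨x-1, y, ⟨by omega, by omega, hy1, hy2⟩, adjL x y, by omega,
          Or.inl (Or.inr (dshift hd (-1) (by rw [hym']; ring)))⟩
      · have hx'' : x = 1 := by omega
        exact ⟨x, y-1, ⟨hx1, hx2, by omega, by omega⟩, adjD x y, by omega,
          Or.inr (Or.inl ⟨by omega, Or.inl (dshiftn hd 1 (by rw [hx'', hym']; ring))⟩)⟩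
  -- A1-
  · by_cases hym : 2 ≤ y
    · exact ⟨x, y-1, ⟨hx1, hx2, by omega, by omega⟩, adjD x y, by omega,
        Or.inl (Or.inr (dshift hd 0 (by ring)))⟩
    · have hym' : y = 1 := by omega
      by_cases hx' : 2 ≤ x
      · exact ⟨x-1, y, ⟨by omega, by omega, hy1, hy2⟩, adjL x y, by omega,
          Or.inl (Or.inl (dshift hd 0 (by rw [hym']; ring)))⟩
      · have hx'' : x = 1 := by omega
        exact ⟨x, y+1, ⟨hx1, hx2, by omega, by omega⟩, adjU x y, by omega,
          Or.inr (Or.inl ⟨by omega, Or.inr (dshiftn hd 0 (by rw [hx'', hym']; ring))⟩)⟩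
  -- A2+
  · by_cases hym : y < m
    · exact ⟨x, y+1, ⟨hx1, hx2, by omega, by omega⟩, adjU x y, by omega,
        Or.inr (Or.inl ⟨by omega, Or.inl (dshift hd 0 (by ring))⟩)⟩
    · exfalso
      have hym' : y = m := by omega
      have h1 : (m+1:ℤ) ∣ (x+1) + y + (n+1) := dvd_trans h21 hd
      have h2 : (m+1:ℤ) ∣ x + r := by
        have e : x + r = ((x+1) + y + (n+1)) - (m+1)*(t+2) := by rw [hym', hn]; ring
        rw [e]; exact dvd_sub h1 (dvd_mul_right _ _)
      have := eq0_of_dvd h2 (by omega) (by omega)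
      omega
  -- A2-
  · by_cases hym : 2 ≤ y
    · exact ⟨x, y-1, ⟨hx1, hx2, by omega, by omega⟩, adjD x y, by omega,
        Or.inr (Or.inl ⟨by omega, Or.inr (dshift hd 0 (by ring))⟩)⟩
    · exfalso
      have hym' : y = 1 := by omega
      have h1 : (m+1:ℤ) ∣ (x+1) - y + (n+1) := dvd_trans h21 hd
      have h2 : (m+1:ℤ) ∣ x + r := by
        have e : x + r = ((x+1) - y + (n+1)) - (m+1)*(t+1) := by rw [hym', hn]; ring
        rw [e]; exact dvd_sub h1 (dvd_mul_right _ _)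
      have := eq0_of_dvd h2 (by omega) (by omega)
      omega
  -- A3+
  · by_cases hxs : m - r + 1 ≤ x
    · by_cases hym : y < m
      · exact ⟨x, y+1, ⟨hx1, hx2, by omega, by omega⟩, adjU x y, by omega,
          Or.inr (Or.inr ⟨⟨hxs, by omega⟩, Or.inl (dshift hd 0 (by ring))⟩)⟩
      · exfalso
        have hym' : y = m := by omega
        have h1 : (m+1:ℤ) ∣ (x+1) + y - (2*m - n - 1) := dvd_trans h21 hd
        have h2 : (m+1:ℤ) ∣ x + r + 2 - (m+1) := by
          have e : x + r + 2 - (m+1) = ((x+1) + y - (2*m - n - 1)) - (m+1)*(t+1) := by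
            rw [hym', hn]; ring
          rw [e]; exact dvd_sub h1 (dvd_mul_right _ _)
        have := eq0_of_dvd h2 (by omega) (by omega)
        omega
    · have hx' : x = m - r := by omega
      have h1 : (m+1:ℤ) ∣ (x+1) + y - (2*m - n - 1) := dvd_trans h21 hd
      have h2 : (m+1:ℤ) ∣ y + 2 := by
        have e : y + 2 = ((x+1) + y - (2*m - n - 1)) - (m+1)*t := by rw [hx', hn]; ring
        rw [e]; exact dvd_sub h1 (dvd_mul_right _ _)
      have hy' : y + 2 = m + 1 := eqM_of_dvd hM h2 (by omega) (by omega)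
      have hy'' : y = m - 1 := by omega
      exact ⟨x, y+1, ⟨by omega, by omega, by omega, by omega⟩, adjU x y, by omega,
        Or.inr (Or.inl ⟨by omega, Or.inr (dshift hd 0 (by rw [hx', hy'']; ring))⟩)⟩
  -- A3-
  · by_cases hxs : m - r + 1 ≤ x
    · by_cases hym : 2 ≤ y
      · exact ⟨x, y-1, ⟨hx1, hx2, by omega, by omega⟩, adjD x y, by omega,
          Or.inr (Or.inr ⟨⟨hxs, by omega⟩, Or.inr (dshift hd 0 (by ring))⟩)⟩
      · exfalso
        have hym' : y = 1 := by omega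
        have h1 : (m+1:ℤ) ∣ (x+1) - y - (2*m - n - 1) := dvd_trans h21 hd
        have h2 : (m+1:ℤ) ∣ x + r + 1 - m := by
          have e : x + r + 1 - m = ((x+1) - y - (2*m - n - 1)) - (m+1)*t := by
            rw [hym', hn]; ring
          rw [e]; exact dvd_sub h1 (dvd_mul_right _ _)
        have := eq0_of_dvd h2 (by omega) (by omega)
        omega
    · have hx' : x = m - r := by omega
      have h1 : (m+1:ℤ) ∣ (x+1) - y - (2*m - n - 1) := dvd_trans h21 hd
      have h2 : (m+1:ℤ) ∣ 2 - y := by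
        have e : 2 - y = ((x+1) - y - (2*m - n - 1)) - (m+1)*t := by rw [hx', hn]; ring
        rw [e]; exact dvd_sub h1 (dvd_mul_right _ _)
      have hy'' : y = 2 := by have := eq0_of_dvd h2 (by omega) (by omega); omega
      exact ⟨x, y-1, ⟨by omega, by omega, by omega, by omega⟩, adjD x y, by omega,
        Or.inr (Or.inl ⟨by omega, Or.inl (dshift hd 1 (by rw [hx', hy'']; ring))⟩)⟩
  -- ============ CASE B : w = (x-1, y) ============
  -- B1+
  · by_cases hym : 2 ≤ y
    · exact ⟨x, y-1, ⟨hx1, hx2, by omega, by omega⟩, adjD x y, by omega,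
        Or.inl (Or.inl (dshift hd 0 (by ring)))⟩
    · have hym' : y = 1 := by omega
      by_cases hx' : x < n
      · exact ⟨x+1, y, ⟨by omega, by omega, hy1, hy2⟩, adjR x y, by omega,
          Or.inl (Or.inr (dshift hd 0 (by rw [hym']; ring)))⟩
      · exfalso
        have hx'' : x = n := by omega
        have := eq0_of_dvd hd (by omega) (by omega)
        omega
  -- B1-
  · by_cases hym : y < m
    · exact ⟨x, y+1, ⟨hx1, hx2, by omega, by omega⟩, adjU x y, by omega,
        Or.inl (Or.inr (dshift hd 0 (by ring)))⟩
    · have hym' : y = m := by omega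
      by_cases hx' : x < n
      · exact ⟨x+1, y, ⟨by omega, by omega, hy1, hy2⟩, adjR x y, by omega,
          Or.inl (Or.inl (dshift hd 1 (by rw [hym']; ring)))⟩
      · exfalso
        have hx'' : x = n := by omega
        have := eq0_of_dvd hd (by omega) (by omega)
        omega
  -- B2+
  · by_cases hym : 2 ≤ y
    · by_cases hxs : x ≤ m - r
      · exact ⟨x, y-1, ⟨hx1, hx2, by omega, by omega⟩, adjD x y, by omega,
          Or.inr (Or.inl ⟨hxs, Or.inl (dshift hd 0 (by ring))⟩)⟩
      · exfalso
        have hx' : x = m - r + 1 := by omega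
        have h1 : (m+1:ℤ) ∣ (x-1) + y + (n+1) := dvd_trans h21 hd
        have h2 : (m+1:ℤ) ∣ y - 1 := by
          have e : y - 1 = ((x-1) + y + (n+1)) - (m+1)*(t+2) := by rw [hx', hn]; ring
          rw [e]; exact dvd_sub h1 (dvd_mul_right _ _)
        have := eq0_of_dvd h2 (by omega) (by omega)
        omega
    · have hym' : y = 1 := by omega
      have h1 : (m+1:ℤ) ∣ (x-1) + y + (n+1) := dvd_trans h21 hd
      have h2 : (m+1:ℤ) ∣ x + r := by
        have e : x + r = ((x-1) + y + (n+1)) - (m+1)*(t+1) := by rw [hym', hn]; ring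
        rw [e]; exact dvd_sub h1 (dvd_mul_right _ _)
      have hx' : x + r = m + 1 := eqM_of_dvd hM h2 (by omega) (by omega)
      by_cases hrr : 2 ≤ r
      · exact ⟨x, y+1, ⟨hx1, hx2, by omega, by omega⟩, adjU x y, by omega,
          Or.inr (Or.inr ⟨⟨by omega, by omega⟩, Or.inr (dshift hd (-1) (by rw [hym']; ring))⟩)⟩
      · have hrr' : r = 1 := by omega
        have hxm : x = m := by omega
        have hA : (x-1) + y + (n+1) = (t+2)*(m+1) := by rw [hym', hxm, hn, hrr']; ring
        rw [hA] at hd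
        obtain ⟨s, hs2⟩ := exists_half hM hd
        refine ⟨x+1, y, ⟨by omega, by omega, hy1, hy2⟩, adjR x y, by omega,
          Or.inl (Or.inl ⟨1 - s, ?_⟩)⟩
        rw [hym', hxm, hn, hrr', show t = 2*s - 2 by omega]; ring
  -- B2-
  · by_cases hym : y < m
    · by_cases hxs : x ≤ m - r
      · exact ⟨x, y+1, ⟨hx1, hx2, by omega, by omega⟩, adjU x y, by omega,
          Or.inr (Or.inl ⟨hxs, Or.inr (dshift hd 0 (by ring))⟩)⟩
      · exfalso
        have hx' : x = m - r + 1 := by omega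
        have h1 : (m+1:ℤ) ∣ (x-1) - y + (n+1) := dvd_trans h21 hd
        have h2 : (m+1:ℤ) ∣ y + 1 := by
          have e : y + 1 = (m+1)*(t+2) - ((x-1) - y + (n+1)) := by rw [hx', hn]; ring
          rw [e]; exact dvd_sub (dvd_mul_right _ _) h1
        have := eq0_of_dvd h2 (by omega) (by omega)
        omega
    · have hym' : y = m := by omega
      have h1 : (m+1:ℤ) ∣ (x-1) - y + (n+1) := dvd_trans h21 hd
      have h2 : (m+1:ℤ) ∣ x + r := by
        have e : x + r = ((x-1) - y + (n+1)) - (m+1)*t := by rw [hym', hn]; ring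
        rw [e]; exact dvd_sub h1 (dvd_mul_right _ _)
      have hx' : x + r = m + 1 := eqM_of_dvd hM h2 (by omega) (by omega)
      by_cases hrr : 2 ≤ r
      · exact ⟨x, y-1, ⟨hx1, hx2, by omega, by omega⟩, adjD x y, by omega,
          Or.inr (Or.inr ⟨⟨by omega, by omega⟩, Or.inl (dshift hd 0 (by rw [hym']; ring))⟩)⟩
      · have hrr' : r = 1 := by omega
        have hxm : x = m := by omega
        have hA : (x-1) - y + (n+1) = (t+1)*(m+1) := by rw [hym', hxm, hn, hrr']; ring
        rw [hA] at hd
        obtain ⟨s, hs2⟩ := exists_half hM hd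
        refine ⟨x+1, y, ⟨by omega, by omega, hy1, hy2⟩, adjR x y, by omega,
          Or.inl (Or.inr ⟨-s, ?_⟩)⟩
        rw [hym', hxm, hn, hrr', show t = 2*s - 1 by omega]; ring
  -- B3+
  · by_cases hxs : x ≤ m - 1
    · by_cases hym : 2 ≤ y
      · exact ⟨x, y-1, ⟨hx1, hx2, by omega, by omega⟩, adjD x y, by omega,
          Or.inr (Or.inr ⟨⟨by omega, hxs⟩, Or.inl (dshift hd 0 (by ring))⟩)⟩
      · exfalso
        have hym' : y = 1 := by omega
        have h1 : (m+1:ℤ) ∣ (x-1) + y - (2*m - n - 1) := dvd_trans h21 hd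
        have h2 : (m+1:ℤ) ∣ x + r + 1 - m := by
          have e : x + r + 1 - m = ((x-1) + y - (2*m - n - 1)) - (m+1)*t := by rw [hym', hn]; ring
          rw [e]; exact dvd_sub h1 (dvd_mul_right _ _)
        have := eq0_of_dvd h2 (by omega) (by omega)
        omega
    · have hx' : x = m := by omega
      have h1 : (m+1:ℤ) ∣ (x-1) + y - (2*m - n - 1) := dvd_trans h21 hd
      have h2 : (m+1:ℤ) ∣ y + r := by
        have e : y + r = ((x-1) + y - (2*m - n - 1)) - (m+1)*t := by rw [hx', hn]; ring
        rw [e]; exact dvd_sub h1 (dvd_mul_right _ _)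
      have hy' : y + r = m + 1 := eqM_of_dvd hM h2 (by omega) (by omega)
      exact ⟨x, y-1, ⟨hx1, hx2, by omega, by omega⟩, adjD x y, by omega,
        Or.inl (Or.inr (dshiftn hd 0 (by rw [hx']; ring)))⟩
  -- B3-
  · by_cases hxs : x ≤ m - 1
    · by_cases hym : y < m
      · exact ⟨x, y+1, ⟨hx1, hx2, by omega, by omega⟩, adjU x y, by omega,
          Or.inr (Or.inr ⟨⟨by omega, hxs⟩, Or.inr (dshift hd 0 (by ring))⟩)⟩
      · exfalso
        have hym' : y = m := by omega
        have h1 : (m+1:ℤ) ∣ (x-1) - y - (2*m - n - 1) := dvd_trans h21 hd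
        have h2 : (m+1:ℤ) ∣ x + r + 2 - (m+1) := by
          have e : x + r + 2 - (m+1) = ((x-1) - y - (2*m - n - 1)) - (m+1)*(t-1) := by
            rw [hym', hn]; ring
          rw [e]; exact dvd_sub h1 (dvd_mul_right _ _)
        have := eq0_of_dvd h2 (by omega) (by omega)
        omega
    · have hx' : x = m := by omega
      have h1 : (m+1:ℤ) ∣ (x-1) - y - (2*m - n - 1) := dvd_trans h21 hd
      have h2 : (m+1:ℤ) ∣ r - y := by
        have e : r - y = ((x-1) - y - (2*m - n - 1)) - (m+1)*t := by rw [hx', hn]; ring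
        rw [e]; exact dvd_sub h1 (dvd_mul_right _ _)
      have hy' : y = r := by have := eq0_of_dvd h2 (by omega) (by omega); omega
      exact ⟨x, y+1, ⟨hx1, hx2, by omega, by omega⟩, adjU x y, by omega,
        Or.inl (Or.inl (dshiftn hd 0 (by rw [hx']; ring)))⟩
  -- ============ CASE C : w = (x, y+1) ============
  -- C1+
  · by_cases hx' : x < n
    · exact ⟨x+1, y, ⟨by omega, by omega, hy1, hy2⟩, adjR x y, by omega,
        Or.inl (Or.inl (dshift hd 0 (by ring)))⟩
    · exfalso
      have hx'' : x = n := by omega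
      have := eq0_of_dvd hd (by omega) (by omega)
      omega
  -- C1-
  · by_cases hx' : 2 ≤ x
    · exact ⟨x-1, y, ⟨by omega, by omega, hy1, hy2⟩, adjL x y, by omega,
        Or.inl (Or.inr (dshift hd 0 (by ring)))⟩
    · have hx'' : x = 1 := by omega
      by_cases hym : 2 ≤ y
      · exact ⟨x, y-1, ⟨hx1, hx2, by omega, by omega⟩, adjD x y, by omega,
          Or.inr (Or.inl ⟨by omega, Or.inl (dshiftn hd 0 (by rw [hx'']; ring))⟩)⟩
      · have hym' : y = 1 := by omega
        exact ⟨x+1, y, ⟨by omega, by omega, hy1, hy2⟩, adjR x y, by omega,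
          Or.inr (Or.inl ⟨by omega, Or.inr (dshiftn hd 0 (by rw [hx'', hym']; ring))⟩)⟩
  -- C2+
  · by_cases hxs : x ≤ m - r - 1
    · exact ⟨x+1, y, ⟨by omega, by omega, hy1, hy2⟩, adjR x y, by omega,
        Or.inr (Or.inl ⟨by omega, Or.inl (dshift hd 0 (by ring))⟩)⟩
    · exfalso
      have hx' : x = m - r := by omega
      have h1 : (m+1:ℤ) ∣ x + (y+1) + (n+1) := dvd_trans h21 hd
      have h2 : (m+1:ℤ) ∣ y := by
        have e : y = (x + (y+1) + (n+1)) - (m+1)*(t+2) := by rw [hx', hn]; ring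
        rw [e]; exact dvd_sub h1 (dvd_mul_right _ _)
      have := eq0_of_dvd h2 (by omega) (by omega)
      omega
  -- C2-
  · by_cases hx' : 2 ≤ x
    · exact ⟨x-1, y, ⟨by omega, by omega, hy1, hy2⟩, adjL x y, by omega,
        Or.inr (Or.inl ⟨by omega, Or.inr (dshift hd 0 (by ring))⟩)⟩
    · have hx'' : x = 1 := by omega
      by_cases hym : 2 ≤ y
      · exact ⟨x, y-1, ⟨hx1, hx2, by omega, by omega⟩, adjD x y, by omega,
          Or.inl (Or.inl (dshiftn hd 0 (by rw [hx'']; ring)))⟩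
      · have hym' : y = 1 := by omega
        exact ⟨x+1, y, ⟨by omega, by omega, hy1, hy2⟩, adjR x y, by omega,
          Or.inl (Or.inr (dshiftn hd 0 (by rw [hx'', hym']; ring)))⟩
  -- C3+
  · by_cases hxs : x ≤ m - 2
    · exact ⟨x+1, y, ⟨by omega, by omega, hy1, hy2⟩, adjR x y, by omega,
        Or.inr (Or.inr ⟨⟨by omega, by omega⟩, Or.inl (dshift hd 0 (by ring))⟩)⟩
    · have hx' : x = m - 1 := by omega
      have h1 : (m+1:ℤ) ∣ x + (y+1) - (2*m - n - 1) := dvd_trans h21 hd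
      have h2 : (m+1:ℤ) ∣ y + 1 + r := by
        have e : y + 1 + r = (x + (y+1) - (2*m - n - 1)) - (m+1)*t := by rw [hx', hn]; ring
        rw [e]; exact dvd_sub h1 (dvd_mul_right _ _)
      have hy' : y + 1 + r = m + 1 := eqM_of_dvd hM h2 (by omega) (by omega)
      exact ⟨x+1, y, ⟨by omega, by omega, hy1, hy2⟩, adjR x y, by omega,
        Or.inl (Or.inr (dshiftn hd 0 (by rw [hx']; ring)))⟩
  -- C3-
  · by_cases hxs : m - r + 2 ≤ x
    · exact ⟨x-1, y, ⟨by omega, by omega, hy1, hy2⟩, adjL x y, by omega,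
        Or.inr (Or.inr ⟨⟨by omega, by omega⟩, Or.inr (dshift hd 0 (by ring))⟩)⟩
    · have hx' : x = m - r + 1 := by omega
      have h1 : (m+1:ℤ) ∣ x - (y+1) - (2*m - n - 1) := dvd_trans h21 hd
      have h2 : (m+1:ℤ) ∣ 1 - y := by
        have e : 1 - y = (x - (y+1) - (2*m - n - 1)) - (m+1)*t := by rw [hx', hn]; ring
        rw [e]; exact dvd_sub h1 (dvd_mul_right _ _)
      have hy' : y = 1 := by have := eq0_of_dvd h2 (by omega) (by omega); omega
      exact ⟨x-1, y, ⟨by omega, by omega, hy1, hy2⟩, adjL x y, by omega,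
        Or.inr (Or.inl ⟨by omega, Or.inl (dshift hd 1 (by rw [hx', hy']; ring))⟩)⟩
  -- ============ CASE D : w = (x, y-1) ============
  -- D1+
  · by_cases hx' : 2 ≤ x
    · exact ⟨x-1, y, ⟨by omega, by omega, hy1, hy2⟩, adjL x y, by omega,
        Or.inl (Or.inl (dshift hd 0 (by ring)))⟩
    · have hx'' : x = 1 := by omega
      by_cases hym : y < m
      · exact ⟨x, y+1, ⟨hx1, hx2, by omega, by omega⟩, adjU x y, by omega,
          Or.inr (Or.inl ⟨by omega, Or.inr (dshiftn hd 0 (by rw [hx'']; ring))⟩)⟩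
      · exfalso
        have hym' : y = m := by omega
        have h1 : (m+1:ℤ) ∣ x + (y-1) - (n+1) := dvd_trans h21 hd
        have h2 : (m+1:ℤ) ∣ r + 1 := by
          have e : r + 1 = -(x + (y-1) - (n+1)) - (m+1)*t := by rw [hx'', hym', hn]; ring
          rw [e]; exact dvd_sub (dvd_neg.mpr h1) (dvd_mul_right _ _)
        have := eq0_of_dvd h2 (by omega) (by omega)
        omega
  -- D1-
  · by_cases hx' : x < n
    · exact ⟨x+1, y, ⟨by omega, by omega, hy1, hy2⟩, adjR x y, by omega,
        Or.inl (Or.inr (dshift hd 0 (by ring)))⟩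
    · exfalso
      have hx'' : x = n := by omega
      have := eq0_of_dvd hd (by omega) (by omega)
      omega
  -- D2+
  · by_cases hx' : 2 ≤ x
    · exact ⟨x-1, y, ⟨by omega, by omega, hy1, hy2⟩, adjL x y, by omega,
        Or.inr (Or.inl ⟨by omega, Or.inl (dshift hd 0 (by ring))⟩)⟩
    · have hx'' : x = 1 := by omega
      by_cases hym : y < m
      · exact ⟨x, y+1, ⟨hx1, hx2, by omega, by omega⟩, adjU x y, by omega,
          Or.inl (Or.inr (dshiftn hd 0 (by rw [hx'']; ring)))⟩
      · have hym' : y = m := by omega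
        have h1 : (m+1:ℤ) ∣ x + (y-1) + (n+1) := dvd_trans h21 hd
        have h2 : (m+1:ℤ) ∣ r - 1 := by
          have e : r - 1 = (x + (y-1) + (n+1)) - (m+1)*(t+2) := by rw [hx'', hym', hn]; ring
          rw [e]; exact dvd_sub h1 (dvd_mul_right _ _)
        have hrr' : r = 1 := by have := eq0_of_dvd h2 (by omega) (by omega); omega
        have hA : x + (y-1) + (n+1) = (t+2)*(m+1) := by rw [hx'', hym', hn, hrr']; ring
        rw [hA] at hd
        obtain ⟨s, hs2⟩ := exists_half hM hd
        refine ⟨x+1, y, ⟨by omega, by omega, hy1, hy2⟩, adjR x y, by omega,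
          Or.inl (Or.inl ⟨1 - s, ?_⟩)⟩
        rw [hx'', hym', hn, hrr', show t = 2*s - 2 by omega]; ring
  -- D2-
  · by_cases hxs : x ≤ m - r - 1
    · exact ⟨x+1, y, ⟨by omega, by omega, hy1, hy2⟩, adjR x y, by omega,
        Or.inr (Or.inl ⟨by omega, Or.inr (dshift hd 0 (by ring))⟩)⟩
    · exfalso
      have hx' : x = m - r := by omega
      have h1 : (m+1:ℤ) ∣ x - (y-1) + (n+1) := dvd_trans h21 hd
      have h2 : (m+1:ℤ) ∣ y := by
        have e : y = (m+1)*(t+2) - (x - (y-1) + (n+1)) := by rw [hx', hn]; ring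
        rw [e]; exact dvd_sub (dvd_mul_right _ _) h1
      have := eq0_of_dvd h2 (by omega) (by omega)
      omega
  -- D3+
  · by_cases hxs : m - r + 2 ≤ x
    · exact ⟨x-1, y, ⟨by omega, by omega, hy1, hy2⟩, adjL x y, by omega,
        Or.inr (Or.inr ⟨⟨by omega, by omega⟩, Or.inl (dshift hd 0 (by ring))⟩)⟩
    · have hx' : x = m - r + 1 := by omega
      have h1 : (m+1:ℤ) ∣ x + (y-1) - (2*m - n - 1) := dvd_trans h21 hd
      have h2 : (m+1:ℤ) ∣ y + 1 := by
        have e : y + 1 = (x + (y-1) - (2*m - n - 1)) - (m+1)*t := by rw [hx', hn]; ring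
        rw [e]; exact dvd_sub h1 (dvd_mul_right _ _)
      have hy' : y + 1 = m + 1 := eqM_of_dvd hM h2 (by omega) (by omega)
      have hym : y = m := by omega
      exact ⟨x-1, y, ⟨by omega, by omega, hy1, hy2⟩, adjL x y, by omega,
        Or.inr (Or.inl ⟨by omega, Or.inr (dshift hd 0 (by rw [hx', hym]; ring))⟩)⟩
  -- D3-
  · by_cases hxs : x ≤ m - 2
    · exact ⟨x+1, y, ⟨by omega, by omega, hy1, hy2⟩, adjR x y, by omega,
        Or.inr (Or.inr ⟨⟨by omega, by omega⟩, Or.inr (dshift hd 0 (by ring))⟩)⟩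
    · have hx' : x = m - 1 := by omega
      have h1 : (m+1:ℤ) ∣ x - (y-1) - (2*m - n - 1) := dvd_trans h21 hd
      have h2 : (m+1:ℤ) ∣ r + 1 - y := by
        have e : r + 1 - y = (x - (y-1) - (2*m - n - 1)) - (m+1)*t := by rw [hx', hn]; ring
        rw [e]; exact dvd_sub h1 (dvd_mul_right _ _)
      have hy' : y = r + 1 := by have := eq0_of_dvd h2 (by omega) (by omega); omega
      exact ⟨x+1, y, ⟨by omega, by omega, hy1, hy2⟩, adjR x y, by omega,
        Or.inl (Or.inl (dshiftn hd 0 (by rw [hx']; ring)))⟩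


lemma grid_finite (m n : ℤ) : Finite (GridVert m n) := by
  refine Finite.of_injective
    (fun p : GridVert m n => (⟨p.val, ?_⟩ : {q // q ∈ Finset.Icc ((1:ℤ),(1:ℤ)) (n, m)}))
    ?_
  · obtain ⟨q, h1, h2, h3, h4⟩ := p
    simp only [Finset.mem_Icc, Prod.le_def]
    exact ⟨⟨h1, h3⟩, ⟨h2, h4⟩⟩
  · intro a b h
    apply Subtype.ext
    have h2 := congrArg (fun (z : {q // q ∈ Finset.Icc ((1:ℤ),(1:ℤ)) (n, m)}) => z.val) h
    simpa using h2

/-- uniqueness of y within one diagonal class in a given column -/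
lemma y_eq (m c y y' : ℤ) (hm : 2 ≤ m) (hy1 : 1 ≤ y) (hy2 : y ≤ m)
    (hy1' : 1 ≤ y') (hy2' : y' ≤ m)
    (h : 2*(m+1) ∣ c + y ∨ 2*(m+1) ∣ c - y)
    (h' : 2*(m+1) ∣ c + y' ∨ 2*(m+1) ∣ c - y') : y = y' := by
  rcases h with h | h <;> rcases h' with h' | h'
  · have hD := dvd_sub h h'
    have e : (c + y) - (c + y') = y - y' := by ring
    rw [e] at hD
    have := eq0_of_dvd hD (by omega) (by omega); omega
  · have hD := dvd_sub h h'
    have e : (c + y) - (c - y') = y + y' := by ring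
    rw [e] at hD
    have := eq0_of_dvd hD (by omega) (by omega); omega
  · have hD := dvd_sub h h'
    have e : (c - y) - (c + y') = -y - y' := by ring
    rw [e] at hD
    have := eq0_of_dvd hD (by omega) (by omega); omega
  · have hD := dvd_sub h h'
    have e : (c - y) - (c - y') = y' - y := by ring
    rw [e] at hD
    have := eq0_of_dvd hD (by omega) (by omega); omega

def WS (m n r : ℤ) : Set (GridVert m n) := {p | Wh m n r p.val.1 p.val.2}

lemma card_WS (m n t r : ℤ) (hm : 2 ≤ m) (ht : 0 ≤ t)
    (hr1 : 1 ≤ r) (hr2 : r ≤ m - 2 - 2*t) (hn : n = m + t*(m+1) + r) :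
    ((WS m n r).ncard : ℤ) ≤ n + m - t - 2 := by
  classical
  have := grid_finite m n
  have hT0 : (0:ℤ) ≤ t*(m+1) := mul_nonneg ht (by omega)
  have hTm : t ≤ t*(m+1) := by nlinarith
  have hmn : m + r ≤ n := by omega
  set W1 : Set (GridVert m n) :=
    {p | 2*(m+1) ∣ p.val.1 + p.val.2 - (n+1) ∨ 2*(m+1) ∣ p.val.1 - p.val.2 - (n+1)} with hW1
  set W2 : Set (GridVert m n) :=
    {p | p.val.1 ≤ m - r ∧
      (2*(m+1) ∣ p.val.1 + p.val.2 + (n+1) ∨ 2*(m+1) ∣ p.val.1 - p.val.2 + (n+1))} with hW2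
  set W3 : Set (GridVert m n) :=
    {p | (m - r + 1 ≤ p.val.1 ∧ p.val.1 ≤ m - 1) ∧
      (2*(m+1) ∣ p.val.1 + p.val.2 - (2*m - n - 1) ∨
        2*(m+1) ∣ p.val.1 - p.val.2 - (2*m - n - 1))} with hW3
  have hsub : WS m n r ⊆ W1 ∪ (W2 ∪ W3) := by
    intro p hp
    rcases hp with h | h | h
    · exact Or.inl h
    · exact Or.inr (Or.inl h)
    · exact Or.inr (Or.inr h)
  -- the target finsets
  set G : Finset ℤ := (Finset.Icc 0 t).image (fun j => r + j*(m+1)) with hG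
  set T1 : Finset ℤ := Finset.Icc 1 n \ G with hT1
  have hGsub : G ⊆ Finset.Icc 1 n := by
    intro a ha
    obtain ⟨j, hj, rfl⟩ := Finset.mem_image.mp ha
    rw [Finset.mem_Icc] at hj ⊢
    constructor
    · have : 0 ≤ j*(m+1) := mul_nonneg hj.1 (by omega)
      omega
    · have : j*(m+1) ≤ t*(m+1) := mul_le_mul_of_nonneg_right hj.2 (by omega)
      omega
  have hGcard : G.card = (t+1).toNat := by
    rw [hG, Finset.card_image_of_injOn, Int.card_Icc]
    · norm_num
    · intro a _ b _ hab
      have hab' : r + a*(m+1) = r + b*(m+1) := hab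
      have h2 : a * (m+1) = b * (m+1) := by omega
      exact mul_right_cancel₀ (by omega : (m+1:ℤ) ≠ 0) h2
  have hT1card : (T1.card : ℤ) = n - (t+1) := by
    rw [hT1, Finset.card_sdiff_of_subset hGsub, hGcard, Int.card_Icc]
    have h1 : (t+1).toNat ≤ (n + 1 - 1).toNat := by omega
    push_cast [h1]
    omega
  -- W1 ≤ T1
  have hc1 : W1.ncard ≤ T1.card := by
    rw [← Set.ncard_coe_finset T1]
    apply Set.ncard_le_ncard_of_injOn (fun p => p.val.1)
    · intro p hp
      rw [hW1, Set.mem_setOf_eq] at hp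
      obtain ⟨⟨px, py⟩, hb1, hb2, hb3, hb4⟩ := p
      simp only at hp ⊢
      rw [Finset.coe_sdiff, Set.mem_diff]
      constructor
      · rw [Finset.coe_Icc]; exact ⟨hb1, hb2⟩
      · intro hmem
        rw [Finset.mem_coe, hG, Finset.mem_image] at hmem
        obtain ⟨j, hj, hjx⟩ := hmem
        rw [Finset.mem_Icc] at hj
        rcases Int.even_or_odd (t - j + 1) with ⟨s, hu⟩ | ⟨s, hu⟩
        · rcases hp with hd | hd
          · have h2 : 2*(m+1) ∣ py :=
              dshift hd s (by rw [← hjx, hn]; linear_combination (m+1)*hu)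
            have := eq0_of_dvd h2 (by omega) (by omega); omega
          · have h2 : 2*(m+1) ∣ -py :=
              dshift hd s (by rw [← hjx, hn]; linear_combination (m+1)*hu)
            have := eq0_of_dvd h2 (by omega) (by omega); omega
        · rcases hp with hd | hd
          · have h2 : 2*(m+1) ∣ py - (m+1) :=
              dshift hd s (by rw [← hjx, hn]; linear_combination (m+1)*hu)
            have := eq0_of_dvd h2 (by omega) (by omega); omega
          · have h2 : 2*(m+1) ∣ -py - (m+1) :=
              dshift hd s (by rw [← hjx, hn]; linear_combination (m+1)*hu)
            have := eq0_of_dvd h2 (by omega) (by omega); omega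
    · intro p hp q hq hxy
      rw [hW1, Set.mem_setOf_eq] at hp hq
      simp only at hxy
      apply Subtype.ext
      apply Prod.ext hxy
      refine y_eq m (p.val.1 - (n+1)) p.val.2 q.val.2 hm p.2.2.2.1 p.2.2.2.2
        q.2.2.2.1 q.2.2.2.2 ?_ ?_
      · rcases hp with hd | hd
        · exact Or.inl (dshift hd 0 (by ring))
        · exact Or.inr (dshift hd 0 (by ring))
      · rcases hq with hd | hd
        · exact Or.inl (dshift hd 0 (by rw [hxy]; ring))
        · exact Or.inr (dshift hd 0 (by rw [hxy]; ring))
  -- W2 ≤ Icc 1 (m-r)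
  have hc2 : W2.ncard ≤ (Finset.Icc (1:ℤ) (m-r)).card := by
    rw [← Set.ncard_coe_finset]
    apply Set.ncard_le_ncard_of_injOn (fun p => p.val.1)
    · intro p hp
      rw [hW2, Set.mem_setOf_eq] at hp
      rw [Finset.coe_Icc, Set.mem_Icc]
      exact ⟨p.2.1, hp.1⟩
    · intro p hp q hq hxy
      rw [hW2, Set.mem_setOf_eq] at hp hq
      simp only at hxy
      apply Subtype.ext
      apply Prod.ext hxy
      refine y_eq m (p.val.1 + (n+1)) p.val.2 q.val.2 hm p.2.2.2.1 p.2.2.2.2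
        q.2.2.2.1 q.2.2.2.2 ?_ ?_
      · rcases hp.2 with hd | hd
        · exact Or.inl (dshift hd 0 (by ring))
        · exact Or.inr (dshift hd 0 (by ring))
      · rcases hq.2 with hd | hd
        · exact Or.inl (dshift hd 0 (by rw [hxy]; ring))
        · exact Or.inr (dshift hd 0 (by rw [hxy]; ring))
  -- W3 ≤ Icc (m-r+1) (m-1)
  have hc3 : W3.ncard ≤ (Finset.Icc (m-r+1) (m-1)).card := by
    rw [← Set.ncard_coe_finset]
    apply Set.ncard_le_ncard_of_injOn (fun p => p.val.1)
    · intro p hp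
      rw [hW3, Set.mem_setOf_eq] at hp
      rw [Finset.coe_Icc, Set.mem_Icc]
      exact hp.1
    · intro p hp q hq hxy
      rw [hW3, Set.mem_setOf_eq] at hp hq
      simp only at hxy
      apply Subtype.ext
      apply Prod.ext hxy
      refine y_eq m (p.val.1 - (2*m - n - 1)) p.val.2 q.val.2 hm p.2.2.2.1 p.2.2.2.2
        q.2.2.2.1 q.2.2.2.2 ?_ ?_
      · rcases hp.2 with hd | hd
        · exact Or.inl (dshift hd 0 (by ring))
        · exact Or.inr (dshift hd 0 (by ring))
      · rcases hq.2 with hd | hd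
        · exact Or.inl (dshift hd 0 (by rw [hxy]; ring))
        · exact Or.inr (dshift hd 0 (by rw [hxy]; ring))
  have htot : (WS m n r).ncard ≤ T1.card + ((Finset.Icc (1:ℤ) (m-r)).card
      + (Finset.Icc (m-r+1) (m-1)).card) := by
    calc (WS m n r).ncard ≤ (W1 ∪ (W2 ∪ W3)).ncard :=
          Set.ncard_le_ncard hsub (Set.toFinite _)
      _ ≤ W1.ncard + (W2 ∪ W3).ncard := Set.ncard_union_le _ _
      _ ≤ W1.ncard + (W2.ncard + W3.ncard) := by
          have := Set.ncard_union_le W2 W3; omega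
      _ ≤ _ := by omega
  have hic2 : ((Finset.Icc (1:ℤ) (m-r)).card : ℤ) = m - r := by
    rw [Int.card_Icc]; omega
  have hic3 : ((Finset.Icc (m-r+1) (m-1)).card : ℤ) = r - 1 := by
    rw [Int.card_Icc]; omega
  have hcast : ((WS m n r).ncard : ℤ) ≤ (T1.card : ℤ) + (((Finset.Icc (1:ℤ) (m-r)).card : ℤ)
      + ((Finset.Icc (m-r+1) (m-1)).card : ℤ)) := by exact_mod_cast htot
  rw [hT1card, hic2, hic3] at hcast
  omega


lemma WS_closed (m n t r : ℤ) (hm : 2 ≤ m) (ht : 0 ≤ t)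
    (hr1 : 1 ≤ r) (hr2 : r ≤ m - 2 - 2*t) (hn : n = m + t*(m+1) + r) :
    ZFClosed (gridGraph m n) (WS m n r)ᶜ := by
  intro v _ w hweq
  exfalso
  have hwmem : w ∈ (gridGraph m n).neighborSet v \ (WS m n r)ᶜ := by
    rw [hweq]; exact Set.mem_singleton w
  obtain ⟨hadj, hwW⟩ := hwmem
  have hwW' : w ∈ WS m n r := Set.not_notMem.mp hwW
  have hadj' : |v.val.1 - w.val.1| + |v.val.2 - w.val.2| = 1 := hadj
  obtain ⟨ax, ay, ⟨b1, b2, b3, b4⟩, hadj2, hne, hwh⟩ :=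
    two_white m n t r v.val.1 v.val.2 w.val.1 w.val.2 hm ht hr1 hr2 hn
      v.prop.1 v.prop.2.1 v.prop.2.2.1 v.prop.2.2.2
      w.prop.1 w.prop.2.1 w.prop.2.2.1 w.prop.2.2.2
      hadj' hwW'
  set w' : GridVert m n := ⟨(ax, ay), b1, b2, b3, b4⟩ with hw'
  have hw'adj : (gridGraph m n).Adj v w' := hadj2
  have hw'mem : w' ∈ (gridGraph m n).neighborSet v \ (WS m n r)ᶜ :=
    ⟨hw'adj, Set.not_notMem.mpr hwh⟩
  rw [hweq] at hw'mem
  have hww : w' = w := hw'mem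
  apply hne
  constructor
  · exact congrArg (fun z => z.val.1) hww
  · exact congrArg (fun z => z.val.2) hww

lemma WS_blocking (m n t r : ℤ) (hm : 2 ≤ m) (ht : 0 ≤ t)
    (hr1 : 1 ≤ r) (hr2 : r ≤ m - 2 - 2*t) (hn : n = m + t*(m+1) + r) :
    IsZeroBlockingSet (gridGraph m n) (WS m n r) := by
  intro hforce
  have hT0 : (0:ℤ) ≤ t*(m+1) := mul_nonneg ht (by omega)
  have hmn : m + r ≤ n := by omega
  have hsub : zfClosure (gridGraph m n) (WS m n r)ᶜ ⊆ (WS m n r)ᶜ :=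
    Set.sInter_subset_of_mem ⟨subset_rfl, WS_closed m n t r hm ht hr1 hr2 hn⟩
  let p0 : GridVert m n := ⟨(n, 1), by omega, le_refl n, le_refl 1, by omega⟩
  have hp0 : p0 ∈ WS m n r :=
    Or.inl (Or.inl ⟨0, by show n + 1 - (n+1) = 2*(m+1)*0; ring⟩)
  have hmem : p0 ∈ zfClosure (gridGraph m n) (WS m n r)ᶜ := by
    rw [hforce]; trivial
  exact (hsub hmem) hp0

lemma zb_le (m n t r : ℤ) (hm : 2 ≤ m) (ht : 0 ≤ t)
    (hr1 : 1 ≤ r) (hr2 : r ≤ m - 2 - 2*t) (hn : n = m + t*(m+1) + r) :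
    (zeroBlockingNumber (gridGraph m n) : ℤ) ≤ n + m - t - 2 := by
  have h1 : zeroBlockingNumber (gridGraph m n) ≤ (WS m n r).ncard :=
    Nat.sInf_le ⟨WS m n r, WS_blocking m n t r hm ht hr1 hr2 hn, rfl⟩
  calc (zeroBlockingNumber (gridGraph m n) : ℤ) ≤ ((WS m n r).ncard : ℤ) := by
        exact_mod_cast h1
    _ ≤ n + m - t - 2 := card_WS m n t r hm ht hr1 hr2 hn


end ZBAux

/-- **Upper bound (Beaudouin-Lafon et al.), second case.** For `n ≥ m ≥ 2`, if
`⌈(n−m)/(m+1)⌉ > ⌊(n−m)/(m−1)⌋`, then `B(G_{m,n}) ≤ n + m − ⌊(n−m)/(m+1)⌋ − 2`. -/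
theorem zero_blocking_upper_bound_second (m n : ℤ) (hm : 2 ≤ m) (hmn : m ≤ n)
    (hcase : ⌊(n - m : ℚ) / (m - 1 : ℚ)⌋ < ⌈(n - m : ℚ) / (m + 1 : ℚ)⌉) :
    (zeroBlockingNumber (gridGraph m n) : ℤ) ≤ n + m - ⌊(n - m : ℚ) / (m + 1 : ℚ)⌋ - 2 := by
  set q : ℤ := ⌊(n - m : ℚ) / (m + 1 : ℚ)⌋ with hqdef
  have hm1 : (0:ℚ) < (m:ℚ) + 1 := by
    have : (2:ℚ) ≤ (m:ℚ) := by exact_mod_cast hm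
    linarith
  have hm2 : (0:ℚ) < (m:ℚ) - 1 := by
    have : (2:ℚ) ≤ (m:ℚ) := by exact_mod_cast hm
    linarith
  have hnm : (0:ℚ) ≤ ((n:ℚ) - m) := by
    have : (m:ℚ) ≤ (n:ℚ) := by exact_mod_cast hmn
    linarith
  -- basic floor bounds
  have hq0 : 0 ≤ q := by
    rw [hqdef]
    exact Int.le_floor.mpr (by simpa using div_nonneg hnm (le_of_lt hm1))
  have hq1 : (q:ℚ) * ((m:ℚ)+1) ≤ (n:ℚ) - m := by
    have := Int.floor_le ((n - m : ℚ) / (m + 1 : ℚ))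
    rw [← hqdef] at this
    calc (q:ℚ) * ((m:ℚ)+1) ≤ (((n:ℚ)-m)/((m:ℚ)+1)) * ((m:ℚ)+1) := by
          apply mul_le_mul_of_nonneg_right _ (le_of_lt hm1)
          push_cast at this ⊢
          linarith
      _ = (n:ℚ) - m := div_mul_cancel₀ _ (ne_of_gt hm1)
  have hq2 : (n:ℚ) - m < ((q:ℚ)+1) * ((m:ℚ)+1) := by
    have := Int.lt_floor_add_one ((n - m : ℚ) / (m + 1 : ℚ))
    rw [← hqdef] at this
    have h2 : ((n:ℚ)-m)/((m:ℚ)+1) < (q:ℚ) + 1 := by push_cast at this ⊢; linarith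
    calc (n:ℚ) - m = (((n:ℚ)-m)/((m:ℚ)+1)) * ((m:ℚ)+1) := (div_mul_cancel₀ _ (ne_of_gt hm1)).symm
      _ < ((q:ℚ)+1) * ((m:ℚ)+1) := by
          apply mul_lt_mul_of_pos_right h2 hm1
  have hq1' : q * (m+1) ≤ n - m := by exact_mod_cast hq1
  have hq2' : n - m < (q+1) * (m+1) := by exact_mod_cast hq2
  set r : ℤ := n - m - q*(m+1) with hrdef
  have hn : n = m + q*(m+1) + r := by rw [hrdef]; ring
  have hr0 : 0 ≤ r := by omega
  have hrm : r ≤ m := by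
    have e : (q+1)*(m+1) = q*(m+1) + m + 1 := by ring
    omega
  -- r ≥ 1 : otherwise the case hypothesis fails
  have hr1 : 1 ≤ r := by
    by_contra hc
    push_neg at hc
    have hr00 : r = 0 := by omega
    have hnm' : (n:ℚ) - m = (q:ℚ) * ((m:ℚ)+1) := by
      have : n - m = q * (m+1) := by omega
      exact_mod_cast this
    have hceil : ⌈(n - m : ℚ) / (m + 1 : ℚ)⌉ = q := by
      rw [show (n - m : ℚ) / (m + 1 : ℚ) = (q:ℚ) by
        rw [hnm', mul_div_assoc, div_self (ne_of_gt hm1), mul_one]]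
      exact Int.ceil_intCast q
    have hfl : q ≤ ⌊(n - m : ℚ) / (m - 1 : ℚ)⌋ := by
      apply Int.le_floor.mpr
      rw [le_div_iff₀ hm2, hnm']
      have : (0:ℚ) ≤ (q:ℚ) := by exact_mod_cast hq0
      nlinarith
    omega
  -- r ≤ m - 2 - 2q
  have hr2 : r ≤ m - 2 - 2*q := by
    have hceil : ⌈(n - m : ℚ) / (m + 1 : ℚ)⌉ ≤ q + 1 := by
      apply Int.ceil_le.mpr
      rw [div_le_iff₀ hm1]
      push_cast
      push_cast at hq2'
      linarith
    have hfl : ⌊(n - m : ℚ) / (m - 1 : ℚ)⌋ ≤ q := by omega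
    have hflt : (n - m : ℚ) / (m - 1 : ℚ) < (q:ℚ) + 1 := by
      have := Int.floor_lt.mp (show ⌊(n - m : ℚ) / (m - 1 : ℚ)⌋ < q + 1 by omega)
      push_cast at this ⊢
      linarith
    have h3 : (n:ℚ) - m < ((q:ℚ)+1) * ((m:ℚ)-1) := by
      rw [div_lt_iff₀ hm2] at hflt
      push_cast at hflt ⊢
      linarith
    have h3' : n - m < (q+1) * (m-1) := by exact_mod_cast h3
    have e : (q+1)*(m-1) = q*(m+1) + m - 1 - 2*q := by ring
    omega
  have := ZBAux.zb_le m n q r hm hq0 hr1 hr2 hn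
  omega
end

section
/- Every minimum zero blocking set W of the grid graph G_{m,n} (with n ≥ m ≥ 2) intersects the first column, the last column, and every pair of consecutive columns: for every x with 1 ≤ x ≤ n−1, W contains a vertex in column x or in column x+1. The analogous statements hold for rows: W intersects the first row, the last row, and for every y with 1 ≤ y ≤ m−1, W contains a vertex in row y or in row y+1. -/
section Fort

variable {V : Type*} {G : SimpleGraph V}

/-- A fort: every vertex outside `F` adjacent to a vertex of `F` has another
neighbor in `F`. -/
def IsFort (G : SimpleGraph V) (F : Set V) : Prop :=
  ∀ v ∉ F, ∀ w ∈ F, G.Adj v w → ∃ w' ∈ F, G.Adj v w' ∧ w' ≠ w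

lemma zfClosure_mem {B : Set V} : B ⊆ zfClosure G B := by
  intro x hx S hS; exact hS.1 hx

lemma zfClosure_closed (B : Set V) : ZFClosed G (zfClosure G B) := by
  intro v hv w hw S hS
  have hsub : zfClosure G B ⊆ S := Set.sInter_subset_of_mem hS
  have hS' : G.neighborSet v \ S ⊆ {w} := by
    intro u hu
    have : u ∈ G.neighborSet v \ zfClosure G B := ⟨hu.1, fun h => hu.2 (hsub h)⟩
    rw [hw] at this; exact this
  have hwv : w ∈ G.neighborSet v := by
    have : w ∈ G.neighborSet v \ zfClosure G B := by rw [hw]; rfl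
    exact this.1
  rcases (Set.subset_singleton_iff_eq.mp hS') with h0 | h1
  · by_contra hwS
    have : w ∈ G.neighborSet v \ S := ⟨hwv, hwS⟩
    rw [h0] at this
    exact this
  · exact hS.2 v (hv S hS) w h1

lemma zfClosure_min {B S : Set V} (h1 : B ⊆ S) (h2 : ZFClosed G S) :
    zfClosure G B ⊆ S := Set.sInter_subset_of_mem ⟨h1, h2⟩

lemma fort_blocking {F : Set V} (hne : F.Nonempty) (hF : IsFort G F) :
    IsZeroBlockingSet G F := by
  intro hforce
  have hclosed : ZFClosed G Fᶜ := by
    intro v hv w hw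
    exfalso
    have hwF : w ∈ F := by
      have : w ∈ G.neighborSet v \ Fᶜ := by rw [hw]; rfl
      simpa using this.2
    have hadj : G.Adj v w := by
      have : w ∈ G.neighborSet v \ Fᶜ := by rw [hw]; rfl
      exact this.1
    obtain ⟨w', hw'F, hadj', hne'⟩ := hF v hv w hwF hadj
    have : w' ∈ G.neighborSet v \ Fᶜ := ⟨hadj', by simpa using hw'F⟩
    rw [hw] at this
    exact hne' this
  have : zfClosure G Fᶜ ⊆ Fᶜ := zfClosure_min le_rfl hclosed
  obtain ⟨x, hx⟩ := hne
  have : x ∈ Fᶜ := this (by rw [hforce]; trivial)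
  exact this hx

lemma blocking_contains_fort {W : Set V} (hW : IsZeroBlockingSet G W) :
    ∃ F ⊆ W, F.Nonempty ∧ IsFort G F := by
  set C := zfClosure G Wᶜ with hC
  refine ⟨Cᶜ, ?_, ?_, ?_⟩
  · intro x hx
    by_contra hxW
    exact hx (zfClosure_mem hxW)
  · rw [Set.nonempty_compl]
    intro h
    exact hW h
  · intro v hv w hw hadj
    by_contra hcon
    push_neg at hcon
    have hsng : G.neighborSet v \ C = {w} := by
      ext u
      constructor
      · rintro ⟨hu1, hu2⟩
        exact hcon u (by simpa using hu2) hu1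
      · rintro rfl
        exact ⟨hadj, by simpa using hw⟩
    have : w ∈ C := zfClosure_closed Wᶜ v (by simpa using hv) w hsng
    exact hw this

lemma min_blocking_is_fort [Finite V] {W : Set V} (hW : IsMinZeroBlockingSet G W) :
    IsFort G W ∧ W.Nonempty := by
  obtain ⟨F, hFW, hFne, hFfort⟩ := blocking_contains_fort hW.1
  have hFb : IsZeroBlockingSet G F := fort_blocking hFne hFfort
  have h1 : zeroBlockingNumber G ≤ F.ncard := Nat.sInf_le ⟨F, hFb, rfl⟩
  have h2 : F.ncard ≤ W.ncard := Set.ncard_le_ncard hFW (Set.toFinite W)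
  have h3 := hW.2
  have hFW' : F = W := Set.eq_of_subset_of_ncard_le hFW (by omega) (Set.toFinite W)
  subst hFW'
  exact ⟨hFfort, hFne⟩

lemma blocking_le {W : Set V} (hW : IsZeroBlockingSet G W) :
    zeroBlockingNumber G ≤ W.ncard := Nat.sInf_le ⟨W, hW, rfl⟩

end Fort

section Grid
variable {m n : ℤ}

instance gridFinite (m n : ℤ) : Finite (GridVert m n) := by
  have : {p : ℤ × ℤ | 1 ≤ p.1 ∧ p.1 ≤ n ∧ 1 ≤ p.2 ∧ p.2 ≤ m}.Finite := by
    apply (Set.finite_Icc ((1 : ℤ), (1 : ℤ)) (n, m)).subset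
    intro p hp
    simp only [Set.mem_Icc, Prod.le_def]
    exact ⟨⟨hp.1, hp.2.2.1⟩, ⟨hp.2.1, hp.2.2.2⟩⟩
  exact this.to_subtype

lemma grid_adj {p q : GridVert m n} (h : (gridGraph m n).Adj p q) :
    (p.val.1 - q.val.1 = 1 ∧ p.val.2 = q.val.2) ∨
    (p.val.1 - q.val.1 = -1 ∧ p.val.2 = q.val.2) ∨
    (p.val.1 = q.val.1 ∧ p.val.2 - q.val.2 = 1) ∨
    (p.val.1 = q.val.1 ∧ p.val.2 - q.val.2 = -1) := by
  have h' : |p.val.1 - q.val.1| + |p.val.2 - q.val.2| = 1 := h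
  rcases abs_cases (p.val.1 - q.val.1) with ⟨h1, _⟩ | ⟨h1, _⟩ <;>
    rcases abs_cases (p.val.2 - q.val.2) with ⟨h2, _⟩ | ⟨h2, _⟩ <;> omega

lemma grid_adj_of {p q : GridVert m n}
    (h : |p.val.1 - q.val.1| + |p.val.2 - q.val.2| = 1) : (gridGraph m n).Adj p q := h

lemma grid_ext {p q : GridVert m n} (h1 : p.val.1 = q.val.1) (h2 : p.val.2 = q.val.2) :
    p = q := Subtype.ext (Prod.ext h1 h2)

/-- A nonempty fort meets column 1. -/
lemma fort_meets_col_one {W : Set (GridVert m n)} (hF : IsFort (gridGraph m n) W)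
    (hne : W.Nonempty) : ∃ A ∈ W, A.val.1 = 1 := by
  obtain ⟨A, hA, hmin⟩ := Set.exists_min_image W (fun A => A.val.1) (Set.toFinite W) hne
  refine ⟨A, hA, ?_⟩
  by_contra h
  obtain ⟨hx1, hx2, hy1, hy2⟩ := A.prop
  have hx : 2 ≤ A.val.1 := by omega
  set v : GridVert m n := ⟨(A.val.1 - 1, A.val.2), by constructor <;> omega⟩ with hv
  have hvW : v ∉ W := by
    intro hvW
    have := hmin v hvW
    simp only [hv] at this
    omega
  have hadj : (gridGraph m n).Adj v A := by
    apply grid_adj_of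
    simp only [hv]
    norm_num
  obtain ⟨w', hw'W, hadj', hne'⟩ := hF v hvW A hA hadj
  have hcases := grid_adj hadj'
  have hminw := hmin w' hw'W
  simp only [hv] at hcases
  have : w' = A := by
    apply grid_ext <;> omega
  exact hne' this

/-- A nonempty fort meets column n. -/
lemma fort_meets_col_n {W : Set (GridVert m n)} (hF : IsFort (gridGraph m n) W)
    (hne : W.Nonempty) : ∃ A ∈ W, A.val.1 = n := by
  obtain ⟨A, hA, hmax⟩ := Set.exists_max_image W (fun A => A.val.1) (Set.toFinite W) hne
  refine ⟨A, hA, ?_⟩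
  by_contra h
  obtain ⟨hx1, hx2, hy1, hy2⟩ := A.prop
  have hx : A.val.1 ≤ n - 1 := by omega
  set v : GridVert m n := ⟨(A.val.1 + 1, A.val.2), by constructor <;> omega⟩ with hv
  have hvW : v ∉ W := by
    intro hvW
    have := hmax v hvW
    simp only [hv] at this
    omega
  have hadj : (gridGraph m n).Adj v A := by
    apply grid_adj_of
    simp only [hv]
    norm_num
  obtain ⟨w', hw'W, hadj', hne'⟩ := hF v hvW A hA hadj
  have hcases := grid_adj hadj'
  have hmaxw := hmax w' hw'W
  simp only [hv] at hcases
  have : w' = A := by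
    apply grid_ext <;> omega
  exact hne' this

/-- A nonempty fort meets row 1. -/
lemma fort_meets_row_one {W : Set (GridVert m n)} (hF : IsFort (gridGraph m n) W)
    (hne : W.Nonempty) : ∃ A ∈ W, A.val.2 = 1 := by
  obtain ⟨A, hA, hmin⟩ := Set.exists_min_image W (fun A => A.val.2) (Set.toFinite W) hne
  refine ⟨A, hA, ?_⟩
  by_contra h
  obtain ⟨hx1, hx2, hy1, hy2⟩ := A.prop
  have hy : 2 ≤ A.val.2 := by omega
  set v : GridVert m n := ⟨(A.val.1, A.val.2 - 1), by constructor <;> omega⟩ with hv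
  have hvW : v ∉ W := by
    intro hvW
    have := hmin v hvW
    simp only [hv] at this
    omega
  have hadj : (gridGraph m n).Adj v A := by
    apply grid_adj_of
    simp only [hv]
    norm_num
  obtain ⟨w', hw'W, hadj', hne'⟩ := hF v hvW A hA hadj
  have hcases := grid_adj hadj'
  have hminw := hmin w' hw'W
  simp only [hv] at hcases
  have : w' = A := by
    apply grid_ext <;> omega
  exact hne' this

/-- A nonempty fort meets row m. -/
lemma fort_meets_row_m {W : Set (GridVert m n)} (hF : IsFort (gridGraph m n) W)
    (hne : W.Nonempty) : ∃ A ∈ W, A.val.2 = m := by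
  obtain ⟨A, hA, hmax⟩ := Set.exists_max_image W (fun A => A.val.2) (Set.toFinite W) hne
  refine ⟨A, hA, ?_⟩
  by_contra h
  obtain ⟨hx1, hx2, hy1, hy2⟩ := A.prop
  have hy : A.val.2 ≤ m - 1 := by omega
  set v : GridVert m n := ⟨(A.val.1, A.val.2 + 1), by constructor <;> omega⟩ with hv
  have hvW : v ∉ W := by
    intro hvW
    have := hmax v hvW
    simp only [hv] at this
    omega
  have hadj : (gridGraph m n).Adj v A := by
    apply grid_adj_of
    simp only [hv]
    norm_num
  obtain ⟨w', hw'W, hadj', hne'⟩ := hF v hvW A hA hadj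
  have hcases := grid_adj hadj'
  have hmaxw := hmax w' hw'W
  simp only [hv] at hcases
  have : w' = A := by
    apply grid_ext <;> omega
  exact hne' this

end Grid

/-- **Lemma 3.** Every minimum zero blocking set of `G_{m,n}` intersects the first
column, the last column, and every pair of consecutive columns; likewise for rows. -/
theorem min_zero_blocking_meets_columns_rows (m n : ℤ) (hm : 2 ≤ m) (hmn : m ≤ n)
    (W : Set (GridVert m n)) (hW : IsMinZeroBlockingSet (gridGraph m n) W) :
    (∃ A ∈ W, A.val.1 = 1) ∧ (∃ A ∈ W, A.val.1 = n) ∧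
    (∀ x : ℤ, 1 ≤ x → x ≤ n - 1 → ∃ A ∈ W, A.val.1 = x ∨ A.val.1 = x + 1) ∧
    (∃ A ∈ W, A.val.2 = 1) ∧ (∃ A ∈ W, A.val.2 = m) ∧
    (∀ y : ℤ, 1 ≤ y → y ≤ m - 1 → ∃ A ∈ W, A.val.2 = y ∨ A.val.2 = y + 1) := by
  obtain ⟨hfort, hne⟩ := min_blocking_is_fort hW
  refine ⟨fort_meets_col_one hfort hne, fort_meets_col_n hfort hne, ?_,
    fort_meets_row_one hfort hne, fort_meets_row_m hfort hne, ?_⟩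
  · -- consecutive columns
    intro x hx1 hx2
    by_contra h
    push_neg at h
    obtain ⟨A1, hA1, hc1⟩ := fort_meets_col_one hfort hne
    obtain ⟨An, hAn, hcn⟩ := fort_meets_col_n hfort hne
    set L : Set (GridVert m n) := {A ∈ W | A.val.1 ≤ x - 1} with hL
    have hA1L : A1 ∈ L := by
      refine ⟨hA1, ?_⟩
      have := h A1 hA1
      omega
    have hAnL : An ∉ L := by
      intro hAnL
      have := h An hAn
      have := hAnL.2
      omega
    have hLsub : L ⊂ W := by
      constructor
      · intro a ha; exact ha.1
      · intro hsub
        exact hAnL (hsub hAn)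
    have fortL : IsFort (gridGraph m n) L := by
      intro v hv w hwL hadj
      obtain ⟨hwW, hwx⟩ := hwL
      have hcadj := grid_adj hadj
      have hvW : v ∉ W := by
        intro hvW
        apply hv
        refine ⟨hvW, ?_⟩
        have := h v hvW
        omega
      obtain ⟨w', hw'W, hadj', hne'⟩ := hfort v hvW w hwW hadj
      refine ⟨w', ⟨hw'W, ?_⟩, hadj', hne'⟩
      have := grid_adj hadj'
      have := h w' hw'W
      omega
    have hblock : IsZeroBlockingSet (gridGraph m n) L := fort_blocking ⟨A1, hA1L⟩ fortL
    have h1 : zeroBlockingNumber (gridGraph m n) ≤ L.ncard := blocking_le hblock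
    have h2 : L.ncard < W.ncard := Set.ncard_lt_ncard hLsub (Set.toFinite W)
    have := hW.2
    omega
  · -- consecutive rows
    intro y hy1 hy2
    by_contra h
    push_neg at h
    obtain ⟨A1, hA1, hc1⟩ := fort_meets_row_one hfort hne
    obtain ⟨An, hAn, hcn⟩ := fort_meets_row_m hfort hne
    set L : Set (GridVert m n) := {A ∈ W | A.val.2 ≤ y - 1} with hL
    have hA1L : A1 ∈ L := by
      refine ⟨hA1, ?_⟩
      have := h A1 hA1
      omega
    have hAnL : An ∉ L := by
      intro hAnL
      have := h An hAn
      have := hAnL.2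
      omega
    have hLsub : L ⊂ W := by
      constructor
      · intro a ha; exact ha.1
      · intro hsub
        exact hAnL (hsub hAn)
    have fortL : IsFort (gridGraph m n) L := by
      intro v hv w hwL hadj
      obtain ⟨hwW, hwx⟩ := hwL
      have hcadj := grid_adj hadj
      have hvW : v ∉ W := by
        intro hvW
        apply hv
        refine ⟨hvW, ?_⟩
        have := h v hvW
        omega
      obtain ⟨w', hw'W, hadj', hne'⟩ := hfort v hvW w hwW hadj
      refine ⟨w', ⟨hw'W, ?_⟩, hadj', hne'⟩
      have := grid_adj hadj'
      have := h w' hw'W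
      omega
    have hblock : IsZeroBlockingSet (gridGraph m n) L := fort_blocking ⟨A1, hA1L⟩ fortL
    have h1 : zeroBlockingNumber (gridGraph m n) ≤ L.ncard := blocking_le hblock
    have h2 : L.ncard < W.ncard := Set.ncard_lt_ncard hLsub (Set.toFinite W)
    have := hW.2
    omega
end

section
/- Let n ≥ m ≥ 2 be integers and suppose n − m = q(m+1) − r, where q and r are integers with 0 ≤ r ≤ m. If there exist integers a, b, c ≥ 0 such that n − m = a(m−1) + bm + c(m+1), then c ≤ q − ⌈r/2⌉, and consequently r ≤ 2q. -/
/-- **Lemma 8.** For `n ≥ m ≥ 2` with `n − m = q(m+1) − r`, `0 ≤ r ≤ m`: if there are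
integers `a, b, c ≥ 0` with `n − m = a(m−1) + bm + c(m+1)`, then `c ≤ q − ⌈r/2⌉`
and consequently `r ≤ 2q`. -/
theorem lemma_abc (m n q r : ℤ) (hm : 2 ≤ m) (hmn : m ≤ n)
    (hr0 : 0 ≤ r) (hrm : r ≤ m) (heq : n - m = q * (m + 1) - r)
    (a b c : ℤ) (ha : 0 ≤ a) (hb : 0 ≤ b) (hc : 0 ≤ c)
    (habc : n - m = a * (m - 1) + b * m + c * (m + 1)) :
    c ≤ q - ⌈(r : ℚ) / 2⌉ ∧ r ≤ 2 * q := by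

  have key : r ≤ 2 * (q - c) := by
    by_contra h
    push_neg at h
    have hN : a * (m - 1) + b * m = (q - c) * (m + 1) - r := by linarith
    have hk1 : 1 ≤ q - c := by nlinarith [mul_nonneg ha (by linarith : (0:ℤ) ≤ m - 1), mul_nonneg hb (by linarith : (0:ℤ) ≤ m)]
    rcases le_or_gt (a + b) (q - c - 1) with ht | ht
    · nlinarith [mul_nonneg ha (by linarith : (0:ℤ) ≤ m - 1), mul_nonneg hb (by linarith : (0:ℤ) ≤ m), mul_le_mul_of_nonneg_right ht (by linarith : (0:ℤ) ≤ m), mul_nonneg ha hb]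
    · have ht' : q - c ≤ a + b := by linarith
      nlinarith [mul_le_mul_of_nonneg_right ht' (by linarith : (0:ℤ) ≤ m - 1)]
  have hceil : ⌈(r : ℚ) / 2⌉ ≤ q - c := by
    rw [Int.ceil_le]
    have : (r : ℚ) ≤ 2 * ((q : ℚ) - c) := by exact_mod_cast key
    push_cast
    linarith
  exact ⟨by linarith, by linarith⟩
end

section
/- Let W be a minimum zero blocking set of the grid graph G_{m,n} (with n ≥ m ≥ 2), and let a_1 < a_2 < ⋯ < a_k be the first coordinates of the white vertices in the bottom row, i.e., {a_1, …, a_k} = {a : (a,1) ∈ W} (this set is nonempty). Then a_1 ≤ m, a_k ≥ n − m + 1, and a_{i+1} − a_i ≤ 2m for every 1 ≤ i ≤ k−1. -/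
section Basics
variable {V : Type*} {G : SimpleGraph V} {B C S : Set V}

lemma subset_zfClosure (G : SimpleGraph V) (B : Set V) : B ⊆ zfClosure G B := by
  intro v hv T hT
  exact hT.1 hv

lemma zfClosure_subset (h1 : B ⊆ S) (h2 : ZFClosed G S) : zfClosure G B ⊆ S :=
  Set.sInter_subset_of_mem ⟨h1, h2⟩

lemma zfClosed_zfClosure (G : SimpleGraph V) (B : Set V) : ZFClosed G (zfClosure G B) := by
  intro v hv w hw T hT
  have hsub : zfClosure G B ⊆ T := Set.sInter_subset_of_mem hT
  by_cases hwT : w ∈ T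
  · exact hwT
  · apply hT.2 v (hsub hv) w
    apply Set.Subset.antisymm
    · intro u hu
      have hu' : u ∈ G.neighborSet v \ zfClosure G B ∨ u ∈ zfClosure G B := by
        by_cases h : u ∈ zfClosure G B
        · exact Or.inr h
        · exact Or.inl ⟨hu.1, h⟩
      rcases hu' with h | h
      · rw [hw] at h; exact h
      · exact absurd (hsub h) hu.2
    · intro u hu
      have huw : u = w := hu
      subst huw
      have hwnb : u ∈ G.neighborSet v := by
        have : u ∈ G.neighborSet v \ zfClosure G B := by rw [hw]; rfl
        exact this.1
      exact ⟨hwnb, hwT⟩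

lemma zf_force {v w : V} (hv : v ∈ zfClosure G B) (hadj : G.Adj v w)
    (h : ∀ u : V, G.Adj v u → u = w ∨ u ∈ zfClosure G B) : w ∈ zfClosure G B := by
  by_cases hw : w ∈ zfClosure G B
  · exact hw
  · apply zfClosed_zfClosure G B v hv w
    apply Set.Subset.antisymm
    · intro u hu
      rcases h u hu.1 with rfl | hmem
      · rfl
      · exact absurd hmem hu.2
    · intro u hu
      have huw : u = w := hu
      subst huw
      exact ⟨hadj, hw⟩

lemma zfClosure_le (h : C ⊆ zfClosure G B) : zfClosure G C ⊆ zfClosure G B :=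
  zfClosure_subset h (zfClosed_zfClosure G B)

end Basics

section Grid
variable {m n : ℤ}

lemma grid_adj_iff {p q : GridVert m n} :
    (gridGraph m n).Adj p q ↔
      ((p.val.2 = q.val.2 ∧ (q.val.1 = p.val.1 + 1 ∨ p.val.1 = q.val.1 + 1)) ∨
       (p.val.1 = q.val.1 ∧ (q.val.2 = p.val.2 + 1 ∨ p.val.2 = q.val.2 + 1))) := by
  change |p.val.1 - q.val.1| + |p.val.2 - q.val.2| = 1 ↔ _
  rw [Int.abs_eq_natAbs, Int.abs_eq_natAbs]
  omega

lemma vert_eq {u w : GridVert m n} (h1 : u.val.1 = w.val.1) (h2 : u.val.2 = w.val.2) : u = w :=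
  Subtype.ext (Prod.ext_iff.mpr ⟨h1, h2⟩)

lemma exists_vert (m n x y : ℤ) (h1 : 1 ≤ x) (h2 : x ≤ n) (h3 : 1 ≤ y) (h4 : y ≤ m) :
    ∃ u : GridVert m n, u.val.1 = x ∧ u.val.2 = y :=
  ⟨⟨(x, y), h1, h2, h3, h4⟩, rfl, rfl⟩

end Grid

section Main
variable {m n : ℤ}

def bottomSet (m n c d : ℤ) : Set (GridVert m n) :=
  {v | v.val.2 = 1 ∧ c ≤ v.val.1 ∧ v.val.1 ≤ d}

/-- Pyramid: from a black bottom block `[c,d]`, all cells with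
`c + y ≤ x + 1` and `x + y ≤ d + 1` get forced. -/
lemma pyramid {c d : ℤ} (hc : 1 ≤ c) (hdn : d ≤ n) :
    ∀ y : ℤ, 1 ≤ y → ∀ v : GridVert m n, v.val.2 ≤ y →
      c + v.val.2 ≤ v.val.1 + 1 → v.val.1 + v.val.2 ≤ d + 1 →
      v ∈ zfClosure (gridGraph m n) (bottomSet m n c d) := by
  refine Int.le_induction ?_ ?_
  · intro v hv h1 h2
    obtain ⟨hx1, hxn, hy1, hym⟩ := v.2
    have : v.val.2 = 1 := by omega
    exact subset_zfClosure _ _ ⟨this, by omega, by omega⟩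
  · intro y hy IH v hv h1 h2
    rcases (by omega : v.val.2 ≤ y ∨ v.val.2 = y + 1) with hv2 | hv2
    · exact IH v hv2 h1 h2
    · obtain ⟨hx1, hxn, hy1, hym⟩ := v.2
      obtain ⟨u, hu1, hu2⟩ := exists_vert m n v.val.1 y (by omega) (by omega) (by omega) (by omega)
      have humem := IH u (by omega) (by omega) (by omega)
      apply zf_force humem (grid_adj_iff.mpr (by omega))
      intro z hz
      rw [grid_adj_iff] at hz
      obtain ⟨hz1, hz2, hz3, hz4⟩ := z.2
      rcases hz with ⟨he, hx | hx⟩ | ⟨he, hyy | hyy⟩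
      · exact Or.inr (IH z (by omega) (by omega) (by omega))
      · exact Or.inr (IH z (by omega) (by omega) (by omega))
      · exact Or.inl (vert_eq (by omega) (by omega))
      · exact Or.inr (IH z (by omega) (by omega) (by omega))

/-- Left triangle: from a black bottom block `[1,d]` with `m ≤ d`, all cells with
`x + y ≤ m + 1` get forced. -/
lemma triangle {d : ℤ} (hmd : m ≤ d) (hdn : d ≤ n) :
    ∀ y : ℤ, 1 ≤ y → ∀ v : GridVert m n, v.val.2 ≤ y →
      v.val.1 + v.val.2 ≤ m + 1 →
      v ∈ zfClosure (gridGraph m n) (bottomSet m n 1 d) := by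
  refine Int.le_induction ?_ ?_
  · intro v hv h2
    obtain ⟨hx1, hxn, hy1, hym⟩ := v.2
    have : v.val.2 = 1 := by omega
    exact subset_zfClosure _ _ ⟨this, by omega, by omega⟩
  · intro y hy IH v hv h2
    rcases (by omega : v.val.2 ≤ y ∨ v.val.2 = y + 1) with hv2 | hv2
    · exact IH v hv2 h2
    · obtain ⟨hx1, hxn, hy1, hym⟩ := v.2
      obtain ⟨u, hu1, hu2⟩ := exists_vert m n v.val.1 y (by omega) (by omega) (by omega) (by omega)
      have humem := IH u (by omega) (by omega)
      apply zf_force humem (grid_adj_iff.mpr (by omega))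
      intro z hz
      rw [grid_adj_iff] at hz
      obtain ⟨hz1, hz2, hz3, hz4⟩ := z.2
      rcases hz with ⟨he, hx | hx⟩ | ⟨he, hyy | hyy⟩
      · exact Or.inr (IH z (by omega) (by omega))
      · exact Or.inr (IH z (by omega) (by omega))
      · exact Or.inl (vert_eq (by omega) (by omega))
      · exact Or.inr (IH z (by omega) (by omega))

/-- Column sweep: once column 1 (and everything forced so far) is black, the whole
grid gets forced, starting from a bottom block `[1,d]` with `m ≤ d`. -/
lemma left_univ (hm : 2 ≤ m) {d : ℤ} (hmd : m ≤ d) (hdn : d ≤ n) :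
    ∀ v : GridVert m n, v ∈ zfClosure (gridGraph m n) (bottomSet m n 1 d) := by
  have col : ∀ x : ℤ, 1 ≤ x → ∀ v : GridVert m n, v.val.1 ≤ x →
      v ∈ zfClosure (gridGraph m n) (bottomSet m n 1 d) := by
    refine Int.le_induction ?_ ?_
    · intro v hv
      obtain ⟨hx1, hxn, hy1, hym⟩ := v.2
      exact triangle hmd hdn m (by omega) v (by omega) (by omega)
    · intro x hx IH v hv
      rcases (by omega : v.val.1 ≤ x ∨ v.val.1 = x + 1) with hv1 | hv1
      · exact IH v hv1
      · obtain ⟨hx1, hxn, hy1, hym⟩ := v.2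
        obtain ⟨u, hu1, hu2⟩ := exists_vert m n x v.val.2 (by omega) (by omega) (by omega) (by omega)
        have humem := IH u (by omega)
        apply zf_force humem (grid_adj_iff.mpr (by omega))
        intro z hz
        rw [grid_adj_iff] at hz
        obtain ⟨hz1, hz2, hz3, hz4⟩ := z.2
        rcases hz with ⟨he, hxx | hxx⟩ | ⟨he, hyy | hyy⟩
        · exact Or.inl (vert_eq (by omega) (by omega))
        · exact Or.inr (IH z (by omega))
        · exact Or.inr (IH z (by omega))
        · exact Or.inr (IH z (by omega))
  intro v
  obtain ⟨hx1, hxn, hy1, hym⟩ := v.2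
  exact col n (by omega) v (by omega)


/-- Reflection wave: from an interior bottom block of length `≥ 2m`, the diagonal
cells `(c+y-2, y)` get forced, down to `(c-1, 1)`. -/
lemma zfReflection (hm : 2 ≤ m) {c d : ℤ} (hc : 2 ≤ c) (hlen : c + 2 * m - 1 ≤ d)
    (hdn : d ≤ n) :
    ∀ t : ℕ, ∀ y : ℤ, 1 ≤ y → y + t = m →
      ∀ v : GridVert m n, v.val.1 = c + y - 2 → v.val.2 = y →
        v ∈ zfClosure (gridGraph m n) (bottomSet m n c d) := by
  intro t
  induction t with
  | zero =>
    intro y hy hyt v hv1 hv2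
    have hym : y = m := by omega
    obtain ⟨hx1, hxn, hy1, hym'⟩ := v.2
    obtain ⟨u, hu1, hu2⟩ := exists_vert m n (c + m - 1) m (by omega) (by omega) (by omega) (by omega)
    have humem := pyramid (n := n) (by omega : (1:ℤ) ≤ c) hdn m (by omega) u (by omega) (by omega) (by omega)
    apply zf_force humem (grid_adj_iff.mpr (by omega))
    intro z hz
    rw [grid_adj_iff] at hz
    obtain ⟨hz1, hz2, hz3, hz4⟩ := z.2
    rcases hz with ⟨he, hx | hx⟩ | ⟨he, hyy | hyy⟩
    · -- z = (c+m, m) : pyramid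
      exact Or.inr (pyramid (by omega) hdn m (by omega) z (by omega) (by omega) (by omega))
    · -- z = (c+m-2, m) = v
      exact Or.inl (vert_eq (by omega) (by omega))
    · -- z.2 = m+1 : impossible
      exact absurd hz4 (by omega)
    · -- z = (c+m-1, m-1) : pyramid
      exact Or.inr (pyramid (by omega) hdn m (by omega) z (by omega) (by omega) (by omega))
  | succ t IH =>
    intro y hy hyt v hv1 hv2
    obtain ⟨hx1, hxn, hy1, hym'⟩ := v.2
    -- previously forced diagonal cell (c+y-1, y+1)
    obtain ⟨w, hw1, hw2⟩ := exists_vert m n (c + y - 1) (y + 1) (by omega) (by omega) (by omega) (by omega)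
    have hwmem := IH (y + 1) (by omega) (by omega) w (by omega) (by omega)
    -- forcer u = (c+y-1, y)
    obtain ⟨u, hu1, hu2⟩ := exists_vert m n (c + y - 1) y (by omega) (by omega) (by omega) (by omega)
    have humem := pyramid (by omega : (1:ℤ) ≤ c) hdn m (by omega) u (by omega) (by omega) (by omega)
    apply zf_force humem (grid_adj_iff.mpr (by omega))
    intro z hz
    rw [grid_adj_iff] at hz
    obtain ⟨hz1, hz2, hz3, hz4⟩ := z.2
    rcases hz with ⟨he, hx | hx⟩ | ⟨he, hyy | hyy⟩
    · -- z = (c+y, y) : pyramid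
      exact Or.inr (pyramid (by omega) hdn m (by omega) z (by omega) (by omega) (by omega))
    · -- z = (c+y-2, y) = v
      exact Or.inl (vert_eq (by omega) (by omega))
    · -- z = (c+y-1, y+1) = w
      exact Or.inr ((vert_eq (by omega) (by omega) : z = w) ▸ hwmem)
    · -- z = (c+y-1, y-1) : pyramid
      exact Or.inr (pyramid (by omega) hdn m (by omega) z (by omega) (by omega) (by omega))

/-- Interior block of length `≥ 2m` forces everything. -/
lemma zfInterior_univ (hm : 2 ≤ m) :
    ∀ k : ℕ, ∀ c d : ℤ, c = 1 + (k : ℤ) → c + 2 * m - 1 ≤ d → d ≤ n →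
      ∀ v : GridVert m n, v ∈ zfClosure (gridGraph m n) (bottomSet m n c d) := by
  intro k
  induction k with
  | zero =>
    intro c d hc hlen hdn v
    have hc1 : c = 1 := by omega
    subst hc1
    have hsub : bottomSet m n 1 m ⊆ bottomSet m n 1 d := by
      rintro w ⟨h1, h2, h3⟩
      exact ⟨h1, h2, by omega⟩
    have := left_univ hm (le_refl m) (by omega) v
    exact zfClosure_le ((subset_zfClosure _ _).trans (zfClosure_le (hsub.trans (subset_zfClosure _ _)))) this
  | succ k IH =>
    intro c d hc hlen hdn v
    have hc2 : 2 ≤ c := by omega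
    -- the cell (c-1, 1) is forced
    obtain ⟨w, hw1, hw2⟩ := exists_vert m n (c - 1) 1 (by omega) (by omega) (by omega) (by omega)
    have hwmem := zfReflection hm hc2 hlen hdn (m - 1).toNat 1 (by omega) (by omega) w (by omega) (by omega)
    -- bottomSet (c-1) d ⊆ closure (bottomSet c d)
    have hsub : bottomSet m n (c - 1) d ⊆ zfClosure (gridGraph m n) (bottomSet m n c d) := by
      rintro z ⟨h1, h2, h3⟩
      rcases (by omega : c ≤ z.val.1 ∨ z.val.1 = c - 1) with h | h
      · exact subset_zfClosure _ _ ⟨h1, h, h3⟩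
      · exact (vert_eq (by omega) (by omega) : z = w) ▸ hwmem
    exact zfClosure_le hsub (IH (c - 1) d (by omega) (by omega) hdn v)


section Mirror
variable {V : Type*} {G : SimpleGraph V}

lemma ZFClosed.of_image (e : V ≃ V) (he : ∀ u v : V, G.Adj (e u) (e v) ↔ G.Adj u v)
    {S : Set V} (hS : ZFClosed G S) : ZFClosed G (e '' S) := by
  intro v hv w hw
  obtain ⟨u, hu, rfl⟩ := hv
  have hnb : G.neighborSet (e u) = e '' G.neighborSet u := by
    ext z
    constructor
    · intro hz
      refine ⟨e.symm z, ?_, e.apply_symm_apply z⟩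
      rw [SimpleGraph.mem_neighborSet, ← he]
      simpa [e.apply_symm_apply] using hz
    · rintro ⟨z', hz', rfl⟩
      exact (he u z').mpr hz'
  rw [hnb, ← Set.image_diff e.injective] at hw
  have h2 : G.neighborSet u \ S = {e.symm w} := by
    have h3 := congrArg (Set.image e.symm) hw
    rw [Set.image_image, Set.image_singleton] at h3
    simpa using h3
  exact ⟨e.symm w, hS u hu (e.symm w) h2, e.apply_symm_apply w⟩

lemma zfClosure_image (e : V ≃ V) (he : ∀ u v : V, G.Adj (e u) (e v) ↔ G.Adj u v)
    (B : Set V) : zfClosure G (e '' B) = e '' zfClosure G B := by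
  have he' : ∀ u v : V, G.Adj (e.symm u) (e.symm v) ↔ G.Adj u v := by
    intro u v
    rw [← he (e.symm u) (e.symm v), e.apply_symm_apply, e.apply_symm_apply]
  have dir : ∀ (f : V ≃ V), (∀ u v : V, G.Adj (f u) (f v) ↔ G.Adj u v) → ∀ C : Set V,
      zfClosure G (f '' C) ⊆ f '' zfClosure G C := by
    intro f hf C
    exact zfClosure_subset (Set.image_mono (subset_zfClosure G C))
      (ZFClosed.of_image f hf (zfClosed_zfClosure G C))
  apply Set.Subset.antisymm
  · exact dir e he B
  · have h1 := dir e.symm he' (e '' B)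
    rw [Equiv.symm_image_image] at h1
    intro x hx
    obtain ⟨y, hy, rfl⟩ := hx
    obtain ⟨z, hz, hzy⟩ := h1 hy
    have hez : e y = z := by rw [← hzy, e.apply_symm_apply]
    rw [hez]
    exact hz

end Mirror

section Main2
variable {m n : ℤ}

def mfun (m n : ℤ) (v : GridVert m n) : GridVert m n :=
  ⟨(n + 1 - v.val.1, v.val.2), by
    obtain ⟨a, b, c, d⟩ := v.2
    exact ⟨by omega, by omega, c, d⟩⟩

lemma mfun_fst (v : GridVert m n) : (mfun m n v).val.1 = n + 1 - v.val.1 := rfl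

lemma mfun_snd (v : GridVert m n) : (mfun m n v).val.2 = v.val.2 := rfl

lemma mfun_invol : Function.Involutive (mfun m n) := by
  intro v
  exact vert_eq (by rw [mfun_fst, mfun_fst]; omega) (by rw [mfun_snd, mfun_snd])

def mirrorE (m n : ℤ) : GridVert m n ≃ GridVert m n :=
  ⟨mfun m n, mfun m n, mfun_invol, mfun_invol⟩

lemma mirrorE_fst (v : GridVert m n) : ((mirrorE m n) v).val.1 = n + 1 - v.val.1 := rfl

lemma mirrorE_snd (v : GridVert m n) : ((mirrorE m n) v).val.2 = v.val.2 := rfl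

lemma mirrorE_adj (u v : GridVert m n) :
    (gridGraph m n).Adj (mirrorE m n u) (mirrorE m n v) ↔ (gridGraph m n).Adj u v := by
  rw [grid_adj_iff, grid_adj_iff]
  have h1 : (mirrorE m n u).val.1 = n + 1 - u.val.1 := rfl
  have h2 : (mirrorE m n u).val.2 = u.val.2 := rfl
  have h3 : (mirrorE m n v).val.1 = n + 1 - v.val.1 := rfl
  have h4 : (mirrorE m n v).val.2 = v.val.2 := rfl
  rw [h1, h2, h3, h4]
  constructor <;> intro h <;> omega

lemma mirror_bottom (hm : 2 ≤ m) (hmn : m ≤ n) :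
    bottomSet m n (n - m + 1) n = mirrorE m n '' bottomSet m n 1 m := by
  ext v
  constructor
  · rintro ⟨h1, h2, h3⟩
    refine ⟨mirrorE m n v, ?_, mfun_invol v⟩
    refine ⟨h1, ?_, ?_⟩
    · rw [mirrorE_fst]; omega
    · rw [mirrorE_fst]; omega
  · rintro ⟨u, ⟨h1, h2, h3⟩, rfl⟩
    refine ⟨h1, ?_, ?_⟩
    · rw [mirrorE_fst]; omega
    · rw [mirrorE_fst]; omega

lemma right_univ (hm : 2 ≤ m) (hmn : m ≤ n) :
    ∀ v : GridVert m n, v ∈ zfClosure (gridGraph m n) (bottomSet m n (n - m + 1) n) := by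
  intro v
  rw [mirror_bottom hm hmn, zfClosure_image (mirrorE m n) mirrorE_adj]
  exact ⟨mirrorE m n v, left_univ hm (le_refl m) hmn _, mfun_invol v⟩

end Main2

end Main

/-- **Proposition 5 (reformulated).** Let `S` be the set of first coordinates of white
vertices in the bottom row for a minimum zero blocking set `W` of `G_{m,n}`. Then `S` is
nonempty, its least element is at most `m`, its greatest element is at least `n − m + 1`,
and consecutive elements differ by at most `2m`. -/
theorem bottom_row_white_gaps (m n : ℤ) (hm : 2 ≤ m) (hmn : m ≤ n)
    (W : Set (GridVert m n)) (hW : IsMinZeroBlockingSet (gridGraph m n) W)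
    (S : Set ℤ) (hS : S = {a : ℤ | ∃ A ∈ W, A.val = (a, 1)}) :
    S.Nonempty ∧ (∃ a ∈ S, a ≤ m) ∧ (∃ a ∈ S, n - m + 1 ≤ a) ∧
    (∀ a ∈ S, ∀ b ∈ S, a < b → (∀ c ∈ S, c ≤ a ∨ b ≤ c) → b - a ≤ 2 * m) := by
  subst hS
  obtain ⟨hblock, -⟩ := hW
  have hforce : ∀ c d : ℤ,
      (∀ v : GridVert m n, v ∈ bottomSet m n c d → v ∉ W) →
      (∀ v : GridVert m n, v ∈ zfClosure (gridGraph m n) (bottomSet m n c d)) → False := by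
    intro c d hsub huniv
    apply hblock
    apply Set.eq_univ_of_forall
    intro v
    have hmono : zfClosure (gridGraph m n) (bottomSet m n c d) ⊆
        zfClosure (gridGraph m n) Wᶜ :=
      zfClosure_le (fun u hu => subset_zfClosure _ _ (hsub u hu))
    exact hmono (huniv v)
  have claim2 : ∃ a ∈ {a : ℤ | ∃ A ∈ W, A.val = (a, 1)}, a ≤ m := by
    by_contra hno
    push_neg at hno
    apply hforce 1 m
    · rintro v ⟨h1, h2, h3⟩ hvW
      have hmem : v.val.1 ∈ {a : ℤ | ∃ A ∈ W, A.val = (a, 1)} :=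
        ⟨v, hvW, Prod.ext_iff.mpr ⟨rfl, h1⟩⟩
      exact absurd h3 (not_le.mpr (hno v.val.1 hmem))
    · exact left_univ hm (le_refl m) hmn
  have claim3 : ∃ a ∈ {a : ℤ | ∃ A ∈ W, A.val = (a, 1)}, n - m + 1 ≤ a := by
    by_contra hno
    push_neg at hno
    apply hforce (n - m + 1) n
    · rintro v ⟨h1, h2, h3⟩ hvW
      have hmem : v.val.1 ∈ {a : ℤ | ∃ A ∈ W, A.val = (a, 1)} :=
        ⟨v, hvW, Prod.ext_iff.mpr ⟨rfl, h1⟩⟩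
      exact absurd h2 (not_le.mpr (hno v.val.1 hmem))
    · exact right_univ hm hmn
  refine ⟨?_, claim2, claim3, ?_⟩
  · obtain ⟨a, ha, -⟩ := claim2
    exact ⟨a, ha⟩
  · intro a ha b hb hab hgap
    by_contra hbig
    push_neg at hbig
    obtain ⟨A, hA, hAval⟩ := ha
    obtain ⟨B, hB, hBval⟩ := hb
    have hA1 : A.val.1 = a := by rw [hAval]
    have hB1 : B.val.1 = b := by rw [hBval]
    obtain ⟨hA2, hA3, -, -⟩ := A.2
    obtain ⟨hB2, hB3, -, -⟩ := B.2
    apply hforce (a + 1) (b - 1)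
    · rintro v ⟨h1, h2, h3⟩ hvW
      have hmem : v.val.1 ∈ {a : ℤ | ∃ A ∈ W, A.val = (a, 1)} :=
        ⟨v, hvW, Prod.ext_iff.mpr ⟨rfl, h1⟩⟩
      rcases hgap v.val.1 hmem with h | h <;> omega
    · exact zfInterior_univ hm a.toNat (a + 1) (b - 1) (by omega) (by omega) (by omega)
end

section
/- Let W be a minimum zero blocking set of the grid graph G_{m,n} with n > m ≥ 2, and suppose every vertex of W is one of the four corner vertices X = (1,1), Y = (n,1), Z = (1,m), W' = (n,m). Then all four corners belong to W and n ∈ {m+1, m+2}. -/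
/- ### Auxiliary lemmas -/

lemma isZFS_of {V : Type*} {G : SimpleGraph V} {B : Set V}
    (h : ∀ S : Set V, B ⊆ S → ZFClosed G S → ∀ v, v ∈ S) : IsZeroForcingSet G B := by
  unfold IsZeroForcingSet zfClosure
  apply Set.eq_univ_of_forall
  intro v
  rw [Set.mem_sInter]
  rintro S ⟨h1, h2⟩
  exact h S h1 h2 v

lemma force_step {V : Type*} {G : SimpleGraph V} {S : Set V} (hS : ZFClosed G S)
    {u c : V} (hu : u ∈ S) (hadj : G.Adj u c)
    (hother : ∀ p, G.Adj u p → p ∉ S → p = c) : c ∈ S := by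
  by_cases hc : c ∈ S
  · exact hc
  · refine hS u hu c ?_
    ext p
    simp only [Set.mem_diff, SimpleGraph.mem_neighborSet, Set.mem_singleton_iff]
    constructor
    · rintro ⟨ha, hns⟩
      exact hother p ha hns
    · rintro rfl
      exact ⟨hadj, hc⟩

lemma abs_helper (x y : ℤ) (h : ((x = 1 ∨ x = -1) ∧ y = 0) ∨ (x = 0 ∧ (y = 1 ∨ y = -1))) :
    |x| + |y| = 1 := by
  rcases abs_cases x with ⟨h1, _⟩ | ⟨h1, _⟩ <;>
    rcases abs_cases y with ⟨h2, _⟩ | ⟨h2, _⟩ <;> omega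

lemma mk_adj {m n : ℤ} {p q : GridVert m n} {a b c d : ℤ} (hp : p.val = (a, b))
    (hq : q.val = (c, d)) (h : |a - c| + |b - d| = 1) : (gridGraph m n).Adj p q := by
  show |p.val.1 - q.val.1| + |p.val.2 - q.val.2| = 1
  rw [hp, hq]
  exact h

lemma adj_coords {m n : ℤ} {u p : GridVert m n} (h : (gridGraph m n).Adj u p)
    {a b : ℤ} (hu : u.val = (a, b)) :
    (p.val.1 = a + 1 ∧ p.val.2 = b) ∨ (p.val.1 = a - 1 ∧ p.val.2 = b) ∨
    (p.val.1 = a ∧ p.val.2 = b + 1) ∨ (p.val.1 = a ∧ p.val.2 = b - 1) := by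
  have h' : |u.val.1 - p.val.1| + |u.val.2 - p.val.2| = 1 := h
  have e1 : u.val.1 = a := by rw [hu]
  have e2 : u.val.2 = b := by rw [hu]
  rw [e1, e2] at h'
  rcases abs_cases (a - p.val.1) with ⟨h1, _⟩ | ⟨h1, _⟩ <;>
    rcases abs_cases (b - p.val.2) with ⟨h2, _⟩ | ⟨h2, _⟩ <;> omega

lemma pair_ext {p q : ℤ × ℤ} (h1 : p.1 = q.1) (h2 : p.2 = q.2) : p = q := by
  cases p; cases q; simp_all

lemma vert_ext {m n : ℤ} {p q : GridVert m n} {a b : ℤ} (hq : q.val = (a, b))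
    (h1 : p.val.1 = a) (h2 : p.val.2 = b) : p = q := by
  apply Subtype.ext
  apply pair_ext
  · rw [hq]; exact h1
  · rw [hq]; exact h2

lemma mem_of_val {m n : ℤ} {S : Set (GridVert m n)} {p q : GridVert m n} {a b : ℤ}
    (hq : q ∈ S) (hqv : q.val = (a, b)) (h1 : p.val.1 = a) (h2 : p.val.2 = b) : p ∈ S := by
  rw [vert_ext hqv h1 h2]; exact hq

lemma mk_mem {m n : ℤ} (a b : ℤ) (h : 1 ≤ a ∧ a ≤ n ∧ 1 ≤ b ∧ b ≤ m) :
    1 ≤ ((a, b) : ℤ × ℤ).1 ∧ ((a, b) : ℤ × ℤ).1 ≤ n ∧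
      1 ≤ ((a, b) : ℤ × ℤ).2 ∧ ((a, b) : ℤ × ℤ).2 ≤ m := h

/-- In the `2 × 3` grid, if some corner is black (outside `W`, where `W` is a set
of corners), then the complement of `W` is a zero forcing set. -/
lemma grid23_forces (W : Set (GridVert 2 3))
    (hcorners : ∀ A ∈ W, A.val ∈
      ({((1 : ℤ), (1 : ℤ)), (3, 1), (1, 2), (3, 2)} : Set (ℤ × ℤ)))
    (c : GridVert 2 3) (hc : c ∉ W)
    (hcval : c.val = (1, 1) ∨ c.val = (3, 1) ∨ c.val = (1, 2) ∨ c.val = (3, 2)) :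
    IsZeroForcingSet (gridGraph 2 3) Wᶜ := by
  apply isZFS_of
  intro S hBS hcl
  have hnc : ∀ p : GridVert 2 3,
      ¬((p.val.1 = 1 ∧ p.val.2 = 1) ∨ (p.val.1 = 3 ∧ p.val.2 = 1) ∨
        (p.val.1 = 1 ∧ p.val.2 = 2) ∨ (p.val.1 = 3 ∧ p.val.2 = 2)) → p ∈ S := by
    intro p hp
    apply hBS
    intro hpW
    have h := hcorners p hpW
    simp only [Set.mem_insert_iff, Set.mem_singleton_iff] at h
    apply hp
    rcases h with h | h | h | h
    · exact Or.inl ⟨by rw [h], by rw [h]⟩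
    · exact Or.inr (Or.inl ⟨by rw [h], by rw [h]⟩)
    · exact Or.inr (Or.inr (Or.inl ⟨by rw [h], by rw [h]⟩))
    · exact Or.inr (Or.inr (Or.inr ⟨by rw [h], by rw [h]⟩))
  have h21 : (⟨(2, 1), mk_mem 2 1 (by norm_num)⟩ : GridVert 2 3) ∈ S := by
    apply hnc
    show ¬(((2 : ℤ) = 1 ∧ (1 : ℤ) = 1) ∨ ((2 : ℤ) = 3 ∧ (1 : ℤ) = 1) ∨
        ((2 : ℤ) = 1 ∧ (1 : ℤ) = 2) ∨ ((2 : ℤ) = 3 ∧ (1 : ℤ) = 2))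
    omega
  have h22 : (⟨(2, 2), mk_mem 2 2 (by norm_num)⟩ : GridVert 2 3) ∈ S := by
    apply hnc
    show ¬(((2 : ℤ) = 1 ∧ (2 : ℤ) = 1) ∨ ((2 : ℤ) = 3 ∧ (2 : ℤ) = 1) ∨
        ((2 : ℤ) = 1 ∧ (2 : ℤ) = 2) ∨ ((2 : ℤ) = 3 ∧ (2 : ℤ) = 2))
    omega
  have hcS : c ∈ S := hBS hc
  -- vertical forcings in the two end columns, via the corner itself
  have f1 : (⟨(1, 1), mk_mem 1 1 (by norm_num)⟩ : GridVert 2 3) ∈ S →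
      (⟨(1, 2), mk_mem 1 2 (by norm_num)⟩ : GridVert 2 3) ∈ S := by
    intro h
    refine force_step hcl h (mk_adj (a := 1) (b := 1) (c := 1) (d := 2) rfl rfl
      (abs_helper _ _ (by omega))) ?_
    intro p hadj hps
    have hco := adj_coords hadj (a := 1) (b := 1) rfl
    obtain ⟨hp1, hp2, hp3, hp4⟩ := p.property
    rcases (show (p.val.1 = 2 ∧ p.val.2 = 1) ∨ (p.val.1 = 1 ∧ p.val.2 = 2) by omega) with
      ⟨h1, h2⟩ | ⟨h1, h2⟩
    · exact absurd (mem_of_val h21 rfl h1 h2) hps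
    · exact vert_ext (a := 1) (b := 2) rfl h1 h2
  have f2 : (⟨(1, 2), mk_mem 1 2 (by norm_num)⟩ : GridVert 2 3) ∈ S →
      (⟨(1, 1), mk_mem 1 1 (by norm_num)⟩ : GridVert 2 3) ∈ S := by
    intro h
    refine force_step hcl h (mk_adj (a := 1) (b := 2) (c := 1) (d := 1) rfl rfl
      (abs_helper _ _ (by omega))) ?_
    intro p hadj hps
    have hco := adj_coords hadj (a := 1) (b := 2) rfl
    obtain ⟨hp1, hp2, hp3, hp4⟩ := p.property
    rcases (show (p.val.1 = 2 ∧ p.val.2 = 2) ∨ (p.val.1 = 1 ∧ p.val.2 = 1) by omega) with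
      ⟨h1, h2⟩ | ⟨h1, h2⟩
    · exact absurd (mem_of_val h22 rfl h1 h2) hps
    · exact vert_ext (a := 1) (b := 1) rfl h1 h2
  have f3 : (⟨(3, 1), mk_mem 3 1 (by norm_num)⟩ : GridVert 2 3) ∈ S →
      (⟨(3, 2), mk_mem 3 2 (by norm_num)⟩ : GridVert 2 3) ∈ S := by
    intro h
    refine force_step hcl h (mk_adj (a := 3) (b := 1) (c := 3) (d := 2) rfl rfl
      (abs_helper _ _ (by omega))) ?_
    intro p hadj hps
    have hco := adj_coords hadj (a := 3) (b := 1) rfl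
    obtain ⟨hp1, hp2, hp3, hp4⟩ := p.property
    rcases (show (p.val.1 = 2 ∧ p.val.2 = 1) ∨ (p.val.1 = 3 ∧ p.val.2 = 2) by omega) with
      ⟨h1, h2⟩ | ⟨h1, h2⟩
    · exact absurd (mem_of_val h21 rfl h1 h2) hps
    · exact vert_ext (a := 3) (b := 2) rfl h1 h2
  have f4 : (⟨(3, 2), mk_mem 3 2 (by norm_num)⟩ : GridVert 2 3) ∈ S →
      (⟨(3, 1), mk_mem 3 1 (by norm_num)⟩ : GridVert 2 3) ∈ S := by
    intro h
    refine force_step hcl h (mk_adj (a := 3) (b := 2) (c := 3) (d := 1) rfl rfl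
      (abs_helper _ _ (by omega))) ?_
    intro p hadj hps
    have hco := adj_coords hadj (a := 3) (b := 2) rfl
    obtain ⟨hp1, hp2, hp3, hp4⟩ := p.property
    rcases (show (p.val.1 = 2 ∧ p.val.2 = 2) ∨ (p.val.1 = 3 ∧ p.val.2 = 1) by omega) with
      ⟨h1, h2⟩ | ⟨h1, h2⟩
    · exact absurd (mem_of_val h22 rfl h1 h2) hps
    · exact vert_ext (a := 3) (b := 1) rfl h1 h2
  -- horizontal forcings via the middle column
  have f5 : (⟨(1, 2), mk_mem 1 2 (by norm_num)⟩ : GridVert 2 3) ∈ S →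
      (⟨(3, 2), mk_mem 3 2 (by norm_num)⟩ : GridVert 2 3) ∈ S := by
    intro h
    refine force_step hcl h22 (mk_adj (a := 2) (b := 2) (c := 3) (d := 2) rfl rfl
      (abs_helper _ _ (by omega))) ?_
    intro p hadj hps
    have hco := adj_coords hadj (a := 2) (b := 2) rfl
    obtain ⟨hp1, hp2, hp3, hp4⟩ := p.property
    rcases (show (p.val.1 = 1 ∧ p.val.2 = 2) ∨ (p.val.1 = 2 ∧ p.val.2 = 1) ∨
        (p.val.1 = 3 ∧ p.val.2 = 2) by omega) with ⟨h1, h2⟩ | ⟨h1, h2⟩ | ⟨h1, h2⟩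
    · exact absurd (mem_of_val h rfl h1 h2) hps
    · exact absurd (mem_of_val h21 rfl h1 h2) hps
    · exact vert_ext (a := 3) (b := 2) rfl h1 h2
  have f6 : (⟨(3, 2), mk_mem 3 2 (by norm_num)⟩ : GridVert 2 3) ∈ S →
      (⟨(1, 2), mk_mem 1 2 (by norm_num)⟩ : GridVert 2 3) ∈ S := by
    intro h
    refine force_step hcl h22 (mk_adj (a := 2) (b := 2) (c := 1) (d := 2) rfl rfl
      (abs_helper _ _ (by omega))) ?_
    intro p hadj hps
    have hco := adj_coords hadj (a := 2) (b := 2) rfl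
    obtain ⟨hp1, hp2, hp3, hp4⟩ := p.property
    rcases (show (p.val.1 = 3 ∧ p.val.2 = 2) ∨ (p.val.1 = 2 ∧ p.val.2 = 1) ∨
        (p.val.1 = 1 ∧ p.val.2 = 2) by omega) with ⟨h1, h2⟩ | ⟨h1, h2⟩ | ⟨h1, h2⟩
    · exact absurd (mem_of_val h rfl h1 h2) hps
    · exact absurd (mem_of_val h21 rfl h1 h2) hps
    · exact vert_ext (a := 1) (b := 2) rfl h1 h2
  have f7 : (⟨(1, 1), mk_mem 1 1 (by norm_num)⟩ : GridVert 2 3) ∈ S →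
      (⟨(3, 1), mk_mem 3 1 (by norm_num)⟩ : GridVert 2 3) ∈ S := by
    intro h
    refine force_step hcl h21 (mk_adj (a := 2) (b := 1) (c := 3) (d := 1) rfl rfl
      (abs_helper _ _ (by omega))) ?_
    intro p hadj hps
    have hco := adj_coords hadj (a := 2) (b := 1) rfl
    obtain ⟨hp1, hp2, hp3, hp4⟩ := p.property
    rcases (show (p.val.1 = 1 ∧ p.val.2 = 1) ∨ (p.val.1 = 2 ∧ p.val.2 = 2) ∨
        (p.val.1 = 3 ∧ p.val.2 = 1) by omega) with ⟨h1, h2⟩ | ⟨h1, h2⟩ | ⟨h1, h2⟩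
    · exact absurd (mem_of_val h rfl h1 h2) hps
    · exact absurd (mem_of_val h22 rfl h1 h2) hps
    · exact vert_ext (a := 3) (b := 1) rfl h1 h2
  have f8 : (⟨(3, 1), mk_mem 3 1 (by norm_num)⟩ : GridVert 2 3) ∈ S →
      (⟨(1, 1), mk_mem 1 1 (by norm_num)⟩ : GridVert 2 3) ∈ S := by
    intro h
    refine force_step hcl h21 (mk_adj (a := 2) (b := 1) (c := 1) (d := 1) rfl rfl
      (abs_helper _ _ (by omega))) ?_
    intro p hadj hps
    have hco := adj_coords hadj (a := 2) (b := 1) rfl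
    obtain ⟨hp1, hp2, hp3, hp4⟩ := p.property
    rcases (show (p.val.1 = 3 ∧ p.val.2 = 1) ∨ (p.val.1 = 2 ∧ p.val.2 = 2) ∨
        (p.val.1 = 1 ∧ p.val.2 = 1) by omega) with ⟨h1, h2⟩ | ⟨h1, h2⟩ | ⟨h1, h2⟩
    · exact absurd (mem_of_val h rfl h1 h2) hps
    · exact absurd (mem_of_val h22 rfl h1 h2) hps
    · exact vert_ext (a := 1) (b := 1) rfl h1 h2
  -- all four corners are in S
  have hfour : (⟨(1, 1), mk_mem 1 1 (by norm_num)⟩ : GridVert 2 3) ∈ S ∧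
      (⟨(3, 1), mk_mem 3 1 (by norm_num)⟩ : GridVert 2 3) ∈ S ∧
      (⟨(1, 2), mk_mem 1 2 (by norm_num)⟩ : GridVert 2 3) ∈ S ∧
      (⟨(3, 2), mk_mem 3 2 (by norm_num)⟩ : GridVert 2 3) ∈ S := by
    rcases hcval with hcv | hcv | hcv | hcv
    · have h11 := mem_of_val (p := (⟨(1, 1), mk_mem 1 1 (by norm_num)⟩ : GridVert 2 3))
        hcS hcv rfl rfl
      exact ⟨h11, f7 h11, f1 h11, f3 (f7 h11)⟩
    · have h31 := mem_of_val (p := (⟨(3, 1), mk_mem 3 1 (by norm_num)⟩ : GridVert 2 3))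
        hcS hcv rfl rfl
      exact ⟨f8 h31, h31, f1 (f8 h31), f3 h31⟩
    · have h12 := mem_of_val (p := (⟨(1, 2), mk_mem 1 2 (by norm_num)⟩ : GridVert 2 3))
        hcS hcv rfl rfl
      exact ⟨f2 h12, f4 (f5 h12), h12, f5 h12⟩
    · have h32 := mem_of_val (p := (⟨(3, 2), mk_mem 3 2 (by norm_num)⟩ : GridVert 2 3))
        hcS hcv rfl rfl
      exact ⟨f2 (f6 h32), f4 h32, f6 h32, h32⟩
  obtain ⟨h11, h31, h12, h32⟩ := hfour
  intro v
  obtain ⟨hv1, hv2, hv3, hv4⟩ := v.property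
  rcases (show (v.val.1 = 1 ∧ v.val.2 = 1) ∨ (v.val.1 = 2 ∧ v.val.2 = 1) ∨
      (v.val.1 = 3 ∧ v.val.2 = 1) ∨ (v.val.1 = 1 ∧ v.val.2 = 2) ∨
      (v.val.1 = 2 ∧ v.val.2 = 2) ∨ (v.val.1 = 3 ∧ v.val.2 = 2) by omega) with
    ⟨h1, h2⟩ | ⟨h1, h2⟩ | ⟨h1, h2⟩ | ⟨h1, h2⟩ | ⟨h1, h2⟩ | ⟨h1, h2⟩
  · exact mem_of_val h11 rfl h1 h2
  · exact mem_of_val h21 rfl h1 h2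
  · exact mem_of_val h31 rfl h1 h2
  · exact mem_of_val h12 rfl h1 h2
  · exact mem_of_val h22 rfl h1 h2
  · exact mem_of_val h32 rfl h1 h2

/-- **Case (2) of Theorem 9.** If a minimum zero blocking set `W` of `G_{m,n}`
(with `n > m ≥ 2`) consists only of corner vertices, then all four corners are in `W`
and `n ∈ {m+1, m+2}`. -/
theorem corners_only_case (m n : ℤ) (hm : 2 ≤ m) (hmn : m < n)
    (W : Set (GridVert m n)) (hW : IsMinZeroBlockingSet (gridGraph m n) W)
    (hcorners : ∀ A ∈ W, A.val ∈
      ({((1 : ℤ), (1 : ℤ)), (n, 1), (1, m), (n, m)} : Set (ℤ × ℤ))) :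
    ((∃ A ∈ W, A.val = ((1 : ℤ), (1 : ℤ))) ∧ (∃ A ∈ W, A.val = (n, 1)) ∧
      (∃ A ∈ W, A.val = (1, m)) ∧ (∃ A ∈ W, A.val = (n, m))) ∧
    (n = m + 1 ∨ n = m + 2) := by
  obtain ⟨hblock, -⟩ := hW
  by_cases hn4 : 4 ≤ n
  · -- If `n ≥ 4`, no corners-only set is blocking: contradiction.
    exfalso
    apply hblock
    apply isZFS_of
    intro S hBS hcl
    have hnc : ∀ p : GridVert m n,
        ¬((p.val.1 = 1 ∧ p.val.2 = 1) ∨ (p.val.1 = n ∧ p.val.2 = 1) ∨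
          (p.val.1 = 1 ∧ p.val.2 = m) ∨ (p.val.1 = n ∧ p.val.2 = m)) → p ∈ S := by
      intro p hp
      apply hBS
      intro hpW
      have h := hcorners p hpW
      simp only [Set.mem_insert_iff, Set.mem_singleton_iff] at h
      apply hp
      rcases h with h | h | h | h
      · exact Or.inl ⟨by rw [h], by rw [h]⟩
      · exact Or.inr (Or.inl ⟨by rw [h], by rw [h]⟩)
      · exact Or.inr (Or.inr (Or.inl ⟨by rw [h], by rw [h]⟩))
      · exact Or.inr (Or.inr (Or.inr ⟨by rw [h], by rw [h]⟩))
    intro v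
    by_cases hcor : (v.val.1 = 1 ∧ v.val.2 = 1) ∨ (v.val.1 = n ∧ v.val.2 = 1) ∨
        (v.val.1 = 1 ∧ v.val.2 = m) ∨ (v.val.1 = n ∧ v.val.2 = m)
    · rcases hcor with ⟨hx, hy⟩ | ⟨hx, hy⟩ | ⟨hx, hy⟩ | ⟨hx, hy⟩
      · -- corner (1,1), forced by (2,1)
        have hv : v.val = ((1 : ℤ), (1 : ℤ)) := pair_ext hx hy
        refine force_step hcl (u := ⟨(2, 1), mk_mem 2 1 (by omega)⟩)
          (hnc _ ?_) (mk_adj (a := 2) (b := 1) rfl hv (abs_helper _ _ (by omega))) ?_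
        · show ¬(((2 : ℤ) = 1 ∧ (1 : ℤ) = 1) ∨ ((2 : ℤ) = n ∧ (1 : ℤ) = 1) ∨
              ((2 : ℤ) = 1 ∧ (1 : ℤ) = m) ∨ ((2 : ℤ) = n ∧ (1 : ℤ) = m))
          omega
        · intro p hadj hps
          have hco := adj_coords hadj (a := 2) (b := 1) rfl
          obtain ⟨hp1, hp2, hp3, hp4⟩ := p.property
          rcases (show (p.val.1 = 1 ∧ p.val.2 = 1) ∨ (p.val.1 = 3 ∧ p.val.2 = 1) ∨
              (p.val.1 = 2 ∧ p.val.2 = 2) by omega) with ⟨h1, h2⟩ | ⟨h1, h2⟩ | ⟨h1, h2⟩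
          · exact vert_ext hv h1 h2
          · exact absurd (hnc p (by omega)) hps
          · exact absurd (hnc p (by omega)) hps
      · -- corner (n,1), forced by (n-1,1)
        have hv : v.val = ((n : ℤ), (1 : ℤ)) := pair_ext hx hy
        refine force_step hcl (u := ⟨(n - 1, 1), mk_mem (n - 1) 1 (by omega)⟩)
          (hnc _ ?_) (mk_adj (a := n - 1) (b := 1) rfl hv (abs_helper _ _ (by omega))) ?_
        · show ¬((n - 1 = 1 ∧ (1 : ℤ) = 1) ∨ (n - 1 = n ∧ (1 : ℤ) = 1) ∨
              (n - 1 = 1 ∧ (1 : ℤ) = m) ∨ (n - 1 = n ∧ (1 : ℤ) = m))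
          omega
        · intro p hadj hps
          have hco := adj_coords hadj (a := n - 1) (b := 1) rfl
          obtain ⟨hp1, hp2, hp3, hp4⟩ := p.property
          rcases (show (p.val.1 = n ∧ p.val.2 = 1) ∨ (p.val.1 = n - 2 ∧ p.val.2 = 1) ∨
              (p.val.1 = n - 1 ∧ p.val.2 = 2) by omega) with ⟨h1, h2⟩ | ⟨h1, h2⟩ | ⟨h1, h2⟩
          · exact vert_ext hv h1 h2
          · exact absurd (hnc p (by omega)) hps
          · exact absurd (hnc p (by omega)) hps
      · -- corner (1,m), forced by (2,m)
        have hv : v.val = ((1 : ℤ), (m : ℤ)) := pair_ext hx hy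
        refine force_step hcl (u := ⟨(2, m), mk_mem 2 m (by omega)⟩)
          (hnc _ ?_) (mk_adj (a := 2) (b := m) rfl hv (abs_helper _ _ (by omega))) ?_
        · show ¬(((2 : ℤ) = 1 ∧ m = 1) ∨ ((2 : ℤ) = n ∧ m = 1) ∨
              ((2 : ℤ) = 1 ∧ m = m) ∨ ((2 : ℤ) = n ∧ m = m))
          omega
        · intro p hadj hps
          have hco := adj_coords hadj (a := 2) (b := m) rfl
          obtain ⟨hp1, hp2, hp3, hp4⟩ := p.property
          rcases (show (p.val.1 = 1 ∧ p.val.2 = m) ∨ (p.val.1 = 3 ∧ p.val.2 = m) ∨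
              (p.val.1 = 2 ∧ p.val.2 = m - 1) by omega) with ⟨h1, h2⟩ | ⟨h1, h2⟩ | ⟨h1, h2⟩
          · exact vert_ext hv h1 h2
          · exact absurd (hnc p (by omega)) hps
          · exact absurd (hnc p (by omega)) hps
      · -- corner (n,m), forced by (n-1,m)
        have hv : v.val = ((n : ℤ), (m : ℤ)) := pair_ext hx hy
        refine force_step hcl (u := ⟨(n - 1, m), mk_mem (n - 1) m (by omega)⟩)
          (hnc _ ?_) (mk_adj (a := n - 1) (b := m) rfl hv (abs_helper _ _ (by omega))) ?_
        · show ¬((n - 1 = 1 ∧ m = 1) ∨ (n - 1 = n ∧ m = 1) ∨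
              (n - 1 = 1 ∧ m = m) ∨ (n - 1 = n ∧ m = m))
          omega
        · intro p hadj hps
          have hco := adj_coords hadj (a := n - 1) (b := m) rfl
          obtain ⟨hp1, hp2, hp3, hp4⟩ := p.property
          rcases (show (p.val.1 = n ∧ p.val.2 = m) ∨ (p.val.1 = n - 2 ∧ p.val.2 = m) ∨
              (p.val.1 = n - 1 ∧ p.val.2 = m - 1) by omega) with ⟨h1, h2⟩ | ⟨h1, h2⟩ | ⟨h1, h2⟩
          · exact vert_ext hv h1 h2
          · exact absurd (hnc p (by omega)) hps
          · exact absurd (hnc p (by omega)) hps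
    · exact hnc v hcor
  · -- Otherwise n = 3 and m = 2.
    have hn3 : n = 3 := by omega
    have hm2 : m = 2 := by omega
    subst hn3 hm2
    refine ⟨⟨?_, ?_, ?_, ?_⟩, Or.inl (by norm_num)⟩
    · by_contra hno
      exact hblock (grid23_forces W hcorners ⟨(1, 1), mk_mem 1 1 (by norm_num)⟩
        (fun hmem => hno ⟨_, hmem, rfl⟩) (Or.inl rfl))
    · by_contra hno
      exact hblock (grid23_forces W hcorners ⟨(3, 1), mk_mem 3 1 (by norm_num)⟩
        (fun hmem => hno ⟨_, hmem, rfl⟩) (Or.inr (Or.inl rfl)))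
    · by_contra hno
      exact hblock (grid23_forces W hcorners ⟨(1, 2), mk_mem 1 2 (by norm_num)⟩
        (fun hmem => hno ⟨_, hmem, rfl⟩) (Or.inr (Or.inr (Or.inl rfl))))
    · by_contra hno
      exact hblock (grid23_forces W hcorners ⟨(3, 2), mk_mem 3 2 (by norm_num)⟩
        (fun hmem => hno ⟨_, hmem, rfl⟩) (Or.inr (Or.inr (Or.inr rfl))))
end
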